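/- arXiv:1705.05261 — 5 statements merged into one kernel-verified Lean document; each statement's English description precedes it below -/
import Mathlib

section
/- Let Φ₁, Φ₂ ∈ H_R(G,σ) have supports contained in Hg₁H and Hg₂H respectively. If g₁ or g₂ normalizes H, then the support of Φ₁*Φ₂ is contained in Hg₁g₂H and (Φ₁*Φ₂)(g₁g₂) = Φ₁(g₁)∘Φ₂(g₂). -/
/-! If `g₁` normalizes `H` then `H g₁ H = g₁ H`, and if `g₂` does then `H g₂ H = H g₂`; either way
a product `y · (y⁻¹ g₁ g₂)` with `y ∈ H g₁ H` and `y⁻¹ g₁ g₂ ∈ H g₂ H` forces `y ∈ g₁ H`, so the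
convolution sum at `g₁ g₂` has the single term `y = g₁`, and the supports multiply as claimed. -/

open scoped BigOperators

/-- The double coset `H g H` of `g` with respect to an (open) subgroup `H`. -/
def doubleCoset {G : Type*} [Group G] (H : Subgroup G) (g : G) : Set G :=
  {x | ∃ h ∈ H, ∃ h' ∈ H, x = h * g * h'}

/-- A function `Φ : G → End_R(V_σ)` belongs to the Hecke algebra `H_R(G, σ)` if it is
`σ`-bi-equivariant and its support is contained in a finite union of `H`-double cosets. -/
def IsHeckeFun {G R V : Type*} [Group G] [CommRing R] [AddCommGroup V] [Module R V]
    (H : Subgroup G) (σ : ↥H →* Module.End R V) (Φ : G → Module.End R V) : Prop :=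
  (∀ (h h' : ↥H) (g : G), Φ (↑h * g * ↑h') = σ h * Φ g * σ h') ∧
  ∃ S : Finset G, ∀ g : G, Φ g ≠ 0 → ∃ s ∈ S, g ∈ doubleCoset H s

/-- Convolution product `(Φ₁ * Φ₂)(g) = ∑_{x ∈ G/H} Φ₁(x) ∘ Φ₂(x⁻¹ g)`. -/
noncomputable def heckeConv {G R V : Type*} [Group G] [CommRing R] [AddCommGroup V] [Module R V]
    (H : Subgroup G) (Φ₁ Φ₂ : G → Module.End R V) : G → Module.End R V :=
  fun g => ∑ᶠ c : G ⧸ H, Φ₁ (Quotient.out c) * Φ₂ ((Quotient.out c)⁻¹ * g)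

open Classical in
/-- The function supported on `H` given by `σ`. -/
noncomputable def heckeUnit {G R V : Type*} [Group G] [CommRing R] [AddCommGroup V] [Module R V]
    (H : Subgroup G) (σ : ↥H →* Module.End R V) : G → Module.End R V :=
  fun g => if hg : g ∈ H then σ ⟨g, hg⟩ else 0

section DoubleCoset

variable {G : Type*} [Group G] {H : Subgroup G} {g x : G}

lemma mem_doubleCoset_iff_inv_mul_mem (hg : g ∈ Subgroup.normalizer (H : Set G)) :
    x ∈ doubleCoset H g ↔ g⁻¹ * x ∈ H := by
  constructor
  · rintro ⟨a, ha, b, hb, rfl⟩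
    have hconj : g⁻¹ * a * g ∈ H := (Subgroup.mem_normalizer_iff''.mp hg a).mp ha
    simpa only [mul_assoc] using H.mul_mem hconj hb
  · intro hx
    exact ⟨1, H.one_mem, g⁻¹ * x, hx, by group⟩

lemma mem_doubleCoset_iff_mul_inv_mem (hg : g ∈ Subgroup.normalizer (H : Set G)) :
    x ∈ doubleCoset H g ↔ x * g⁻¹ ∈ H := by
  constructor
  · rintro ⟨a, ha, b, hb, rfl⟩
    have hconj : g * b * g⁻¹ ∈ H := (Subgroup.mem_normalizer_iff.mp hg b).mp hb
    simpa only [mul_assoc] using H.mul_mem ha hconj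
  · intro hx
    exact ⟨x * g⁻¹, hx, 1, H.one_mem, by group⟩

variable {g₁ g₂ y z : G}

lemma mul_mem_doubleCoset_mul
    (hnorm : g₁ ∈ Subgroup.normalizer (H : Set G) ∨ g₂ ∈ Subgroup.normalizer (H : Set G))
    (hy : y ∈ doubleCoset H g₁) (hz : z ∈ doubleCoset H g₂) : y * z ∈ doubleCoset H (g₁ * g₂) := by
  obtain ⟨a, ha, b, hb, rfl⟩ := hy
  obtain ⟨c, hc, d, hd, rfl⟩ := hz
  rcases hnorm with hg₁ | hg₂
  · have hconj : g₁ * (b * c) * g₁⁻¹ ∈ H :=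
      (Subgroup.mem_normalizer_iff.mp hg₁ _).mp (H.mul_mem hb hc)
    exact ⟨a * (g₁ * (b * c) * g₁⁻¹), H.mul_mem ha hconj, d, hd, by group⟩
  · have hconj : g₂⁻¹ * (b * c) * g₂ ∈ H :=
      (Subgroup.mem_normalizer_iff''.mp hg₂ _).mp (H.mul_mem hb hc)
    exact ⟨a, ha, g₂⁻¹ * (b * c) * g₂ * d, H.mul_mem hconj hd, by group⟩

lemma inv_mul_mem_of_mem_doubleCoset
    (hnorm : g₁ ∈ Subgroup.normalizer (H : Set G) ∨ g₂ ∈ Subgroup.normalizer (H : Set G))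
    (hy : y ∈ doubleCoset H g₁) (hy' : y⁻¹ * (g₁ * g₂) ∈ doubleCoset H g₂) : g₁⁻¹ * y ∈ H := by
  rcases hnorm with hg₁ | hg₂
  · exact (mem_doubleCoset_iff_inv_mul_mem hg₁).mp hy
  · have h : y⁻¹ * (g₁ * g₂) * g₂⁻¹ ∈ H := (mem_doubleCoset_iff_mul_inv_mem hg₂).mp hy'
    have hinv : (y⁻¹ * (g₁ * g₂) * g₂⁻¹)⁻¹ = g₁⁻¹ * y := by group
    exact hinv ▸ H.inv_mem h

end DoubleCoset

section Hecke

variable {G R V : Type*} [Group G] [CommRing R] [AddCommGroup V] [Module R V]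
  {H : Subgroup G} {σ : ↥H →* Module.End R V} {Φ₁ Φ₂ : G → Module.End R V}

lemma IsHeckeFun.apply_mul_mul_apply_inv_mul (hΦ₁ : IsHeckeFun H σ Φ₁)
    (hΦ₂ : IsHeckeFun H σ Φ₂) (y z : G) (h : ↥H) :
    Φ₁ (y * h) * Φ₂ (↑h⁻¹ * z) = Φ₁ y * Φ₂ z := by
  have h₁ : Φ₁ (y * h) = Φ₁ y * σ h := by
    simpa using hΦ₁.1 1 h y
  have h₂ : Φ₂ (↑h⁻¹ * z) = σ h⁻¹ * Φ₂ z := by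
    simpa using hΦ₂.1 h⁻¹ 1 z
  rw [h₁, h₂, mul_assoc, ← mul_assoc (σ h), ← map_mul, mul_inv_cancel, map_one, one_mul]

lemma exists_ne_zero_of_heckeConv_ne_zero {x : G} (hx : heckeConv H Φ₁ Φ₂ x ≠ 0) :
    ∃ y, Φ₁ y * Φ₂ (y⁻¹ * x) ≠ 0 := by
  by_contra! h
  exact hx (finsum_eq_zero_of_forall_eq_zero fun c => h _)

/-- Bi-equivariance makes the summand independent of the coset representative, so a sum
supported on the single coset `y₀ H` is its value at `y₀`. -/
lemma IsHeckeFun.heckeConv_eq_of_support_subset (hΦ₁ : IsHeckeFun H σ Φ₁)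
    (hΦ₂ : IsHeckeFun H σ Φ₂) {x : G} (y₀ : G)
    (hsupp : ∀ y, Φ₁ y * Φ₂ (y⁻¹ * x) ≠ 0 → y₀⁻¹ * y ∈ H) :
    heckeConv H Φ₁ Φ₂ x = Φ₁ y₀ * Φ₂ (y₀⁻¹ * x) := by
  have hsingle : heckeConv H Φ₁ Φ₂ x
      = Φ₁ (y₀ : G ⧸ H).out * Φ₂ ((y₀ : G ⧸ H).out⁻¹ * x) := by
    refine finsum_eq_single _ _ fun c hc => ?_
    by_contra hne
    exact hc (by rw [← c.out_eq]; exact (QuotientGroup.eq.mpr (hsupp _ hne)).symm)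
  have hout : y₀⁻¹ * (y₀ : G ⧸ H).out ∈ H := QuotientGroup.eq.mp (y₀ : G ⧸ H).out_eq.symm
  rw [hsingle, ← hΦ₁.apply_mul_mul_apply_inv_mul hΦ₂ y₀ (y₀⁻¹ * x) ⟨_, hout⟩]
  congr 2 <;> simp only [Subgroup.coe_inv] <;> group

end Hecke

/-- If `Φ₁, Φ₂` in the Hecke algebra `H_R(G,σ)` are supported in `H g₁ H` and `H g₂ H`
respectively, and `g₁` or `g₂` normalizes `H`, then `Φ₁ * Φ₂` is supported in `H g₁ g₂ H`
and `(Φ₁ * Φ₂)(g₁ g₂) = Φ₁(g₁) ∘ Φ₂(g₂)`. -/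
theorem statement1 {G R V : Type*} [Group G] [CommRing R] [AddCommGroup V] [Module R V]
    (H : Subgroup G) (σ : ↥H →* Module.End R V) (g₁ g₂ : G)
    (Φ₁ Φ₂ : G → Module.End R V)
    (h₁ : IsHeckeFun H σ Φ₁) (h₂ : IsHeckeFun H σ Φ₂)
    (hs₁ : ∀ x : G, Φ₁ x ≠ 0 → x ∈ doubleCoset H g₁)
    (hs₂ : ∀ x : G, Φ₂ x ≠ 0 → x ∈ doubleCoset H g₂)
    (hnorm : g₁ ∈ Subgroup.normalizer (H : Set G) ∨ g₂ ∈ Subgroup.normalizer (H : Set G)) :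
    (∀ x : G, heckeConv H Φ₁ Φ₂ x ≠ 0 → x ∈ doubleCoset H (g₁ * g₂)) ∧
    heckeConv H Φ₁ Φ₂ (g₁ * g₂) = Φ₁ g₁ * Φ₂ g₂ := by
  have hs {x : G} (y : G) (hy : Φ₁ y * Φ₂ (y⁻¹ * x) ≠ 0) :
      y ∈ doubleCoset H g₁ ∧ y⁻¹ * x ∈ doubleCoset H g₂ :=
    ⟨hs₁ y (left_ne_zero_of_mul hy), hs₂ _ (right_ne_zero_of_mul hy)⟩
  refine ⟨fun x hx => ?_, ?_⟩
  · obtain ⟨y, hy⟩ := exists_ne_zero_of_heckeConv_ne_zero hx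
    simpa only [mul_inv_cancel_left] using mul_mem_doubleCoset_mul hnorm (hs y hy).1 (hs y hy).2
  · rw [h₁.heckeConv_eq_of_support_subset h₂ g₁
      fun y hy => inv_mul_mem_of_mem_doubleCoset hnorm (hs y hy).1 (hs y hy).2, inv_mul_cancel_left]
end

section
/- For g ∈ G, the evaluation map Φ ↦ Φ(g) is an isomorphism of R-modules from H_R(G,σ)_{HgH} (functions in the Hecke algebra supported on HgH) onto the intertwining space I_g(σ) = Hom_{H ∩ H^g}(σ, σ^g). Consequently g intertwines σ if and only if some Φ ∈ H_R(G,σ) satisfies Φ(g) ≠ 0. -/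
open scoped BigOperators

/-!
A bi-equivariant `Φ` is determined on `HgH` by `Φ(g)`, and bi-equivariance at `g` forces
`Φ(g)` to intertwine `σ` and `σ^g` on `H ∩ H^g`. Conversely an intertwiner `f` extends to
`h g h' ↦ σ(h) f σ(h')`; this is well defined because `h₁ g h₁' = h₂ g h₂'` means that
`g (h₂' h₁'⁻¹) g⁻¹ = h₂⁻¹ h₁` lies in `H`, so the intertwining relation moves `σ(h₂⁻¹ h₁)`
across `f`.
-/

section Intertwining

variable {G R V : Type*} [Group G] [CommRing R] [AddCommGroup V] [Module R V]
  (H : Subgroup G) (σ : ↥H →* Module.End R V)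

lemma mem_doubleCoset_iff {g x : G} :
    x ∈ doubleCoset H g ↔ ∃ p : H × H, x = p.1 * g * p.2 :=
  ⟨fun ⟨h, hh, h', hh', hx⟩ => ⟨(⟨h, hh⟩, ⟨h', hh'⟩), hx⟩,
    fun ⟨p, hx⟩ => ⟨p.1, p.1.2, p.2, p.2.2, hx⟩⟩

lemma mul_mul_mem_doubleCoset_iff {g x : G} (h h' : H) :
    (h : G) * x * h' ∈ doubleCoset H g ↔ x ∈ doubleCoset H g := by
  simp only [mem_doubleCoset_iff]
  constructor
  · rintro ⟨p, hp⟩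
    refine ⟨(h⁻¹ * p.1, p.2 * h'⁻¹), ?_⟩
    calc x = (h : G)⁻¹ * (h * x * h') * (h' : G)⁻¹ := by group
      _ = _ := by rw [hp]; push_cast; group
  · rintro ⟨p, rfl⟩
    exact ⟨(h * p.1, p.2 * h'), by push_cast; group⟩

def IsBiEquivariant (Φ : G → Module.End R V) : Prop :=
  ∀ (h h' : H) (x : G), Φ (h * x * h') = σ h * Φ x * σ h'

def IsIntertwiner (g : G) (f : Module.End R V) : Prop :=
  ∀ (x : G) (hx : x ∈ H) (hx' : g * x * g⁻¹ ∈ H), σ ⟨g * x * g⁻¹, hx'⟩ * f = f * σ ⟨x, hx⟩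

variable {H σ}

lemma IsBiEquivariant.isIntertwiner {Φ : G → Module.End R V} (hΦ : IsBiEquivariant H σ Φ)
    (g : G) : IsIntertwiner H σ g (Φ g) := by
  intro x hx hx'
  have left := hΦ ⟨g * x * g⁻¹, hx'⟩ 1 g
  have right := hΦ 1 ⟨x, hx⟩ g
  simp only [OneMemClass.coe_one, mul_one, one_mul, map_one, inv_mul_cancel_right] at left right
  rw [← left, ← right]

lemma IsBiEquivariant.eqOn_doubleCoset {Φ₁ Φ₂ : G → Module.End R V}
    (hΦ₁ : IsBiEquivariant H σ Φ₁) (hΦ₂ : IsBiEquivariant H σ Φ₂) {g : G} (heq : Φ₁ g = Φ₂ g) :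
    Set.EqOn Φ₁ Φ₂ (doubleCoset H g) := by
  intro x hx
  obtain ⟨⟨h, h'⟩, rfl⟩ := (mem_doubleCoset_iff H).1 hx
  rw [hΦ₁, hΦ₂, heq]

lemma IsIntertwiner.map_mul_mul_eq {g : G} {f : Module.End R V} (hf : IsIntertwiner H σ g f)
    {h₁ h₁' h₂ h₂' : H} (heq : (h₁ : G) * g * h₁' = h₂ * g * h₂') :
    σ h₁ * f * σ h₁' = σ h₂ * f * σ h₂' := by
  have hconj : g * ((h₂' * h₁'⁻¹ : H) : G) * g⁻¹ = ((h₂⁻¹ * h₁ : H) : G) := by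
    push_cast
    calc g * (h₂' * (h₁' : G)⁻¹) * g⁻¹
        = (h₂ : G)⁻¹ * (h₂ * g * h₂') * (h₁' : G)⁻¹ * g⁻¹ := by group
      _ = (h₂ : G)⁻¹ * h₁ := by rw [← heq]; group
  have hmove : σ (h₂⁻¹ * h₁) * f = f * σ (h₂' * h₁'⁻¹) := by
    have := hf _ (h₂' * h₁'⁻¹).2 (hconj ▸ (h₂⁻¹ * h₁).2)
    simpa only [hconj] using this
  calc σ h₁ * f * σ h₁' = σ h₂ * (σ (h₂⁻¹ * h₁) * f) * σ h₁' := by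
        rw [map_mul, ← mul_assoc, ← mul_assoc, ← map_mul, mul_inv_cancel, map_one, one_mul]
    _ = σ h₂ * f * σ h₂' := by
        rw [hmove, map_mul, mul_assoc, mul_assoc, mul_assoc, ← map_mul, inv_mul_cancel,
          map_one, mul_one, mul_assoc]

variable (H σ)

open Classical in
noncomputable def heckeExtension (g : G) (f : Module.End R V) : G → Module.End R V :=
  fun x => if hx : ∃ p : H × H, x = p.1 * g * p.2 then σ hx.choose.1 * f * σ hx.choose.2 else 0

variable {H σ}

lemma heckeExtension_apply_mul_mul {g : G} {f : Module.End R V} (hf : IsIntertwiner H σ g f)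
    (h h' : H) : heckeExtension H σ g f (h * g * h') = σ h * f * σ h' := by
  have hx : ∃ p : H × H, (h : G) * g * h' = p.1 * g * p.2 := ⟨(h, h'), rfl⟩
  rw [heckeExtension, dif_pos hx]
  exact hf.map_mul_mul_eq hx.choose_spec.symm

lemma heckeExtension_apply_self {g : G} {f : Module.End R V} (hf : IsIntertwiner H σ g f) :
    heckeExtension H σ g f g = f := by
  simpa using heckeExtension_apply_mul_mul hf 1 1

lemma heckeExtension_apply_of_notMem {g x : G} (f : Module.End R V)
    (hx : x ∉ doubleCoset H g) : heckeExtension H σ g f x = 0 := by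
  rw [mem_doubleCoset_iff] at hx
  rw [heckeExtension, dif_neg hx]

lemma mem_doubleCoset_of_heckeExtension_ne_zero {g x : G} {f : Module.End R V}
    (hx : heckeExtension H σ g f x ≠ 0) : x ∈ doubleCoset H g := by
  by_contra hnot
  exact hx (heckeExtension_apply_of_notMem f hnot)

lemma IsIntertwiner.isBiEquivariant_heckeExtension {g : G} {f : Module.End R V}
    (hf : IsIntertwiner H σ g f) : IsBiEquivariant H σ (heckeExtension H σ g f) := by
  intro h h' x
  by_cases hx : x ∈ doubleCoset H g
  · obtain ⟨⟨a, b⟩, rfl⟩ := (mem_doubleCoset_iff H).1 hx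
    have hreassoc : (h : G) * (a * g * b) * h' = ((h * a : H) : G) * g * ((b * h' : H) : G) := by
      push_cast; group
    rw [hreassoc, heckeExtension_apply_mul_mul hf, heckeExtension_apply_mul_mul hf]
    simp only [map_mul, mul_assoc]
  · have hx' : (h : G) * x * h' ∉ doubleCoset H g := by
      rwa [mul_mul_mem_doubleCoset_iff]
    rw [heckeExtension_apply_of_notMem f hx, heckeExtension_apply_of_notMem f hx',
      mul_zero, zero_mul]

lemma IsIntertwiner.isHeckeFun_heckeExtension {g : G} {f : Module.End R V}
    (hf : IsIntertwiner H σ g f) : IsHeckeFun H σ (heckeExtension H σ g f) :=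
  ⟨hf.isBiEquivariant_heckeExtension, {g}, fun _ hx =>
    ⟨g, Finset.mem_singleton_self g, mem_doubleCoset_of_heckeExtension_ne_zero hx⟩⟩

end Intertwining

/-- For `g ∈ G`, evaluation `Φ ↦ Φ(g)` is an isomorphism of `R`-modules from the set of
Hecke-algebra elements supported on `H g H` onto the intertwining space
`I_g(σ) = Hom_{H ∩ H^g}(σ, σ^g)`; consequently `g` intertwines `σ` iff some `Φ` in the
Hecke algebra satisfies `Φ(g) ≠ 0`. -/
theorem statement2 {G R V : Type*} [Group G] [CommRing R] [AddCommGroup V] [Module R V]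
    (H : Subgroup G) (σ : ↥H →* Module.End R V) (g : G) :
    Set.BijOn (fun Φ : G → Module.End R V => Φ g)
      {Φ | IsHeckeFun H σ Φ ∧ ∀ x : G, Φ x ≠ 0 → x ∈ doubleCoset H g}
      {f : Module.End R V | ∀ (x : G) (hx : x ∈ H) (hx' : g * x * g⁻¹ ∈ H),
        σ ⟨g * x * g⁻¹, hx'⟩ * f = f * σ ⟨x, hx⟩} ∧
    (∀ Φ₁ Φ₂ : G → Module.End R V, (Φ₁ + Φ₂) g = Φ₁ g + Φ₂ g) ∧
    (∀ (r : R) (Φ : G → Module.End R V), (r • Φ) g = r • Φ g) ∧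
    ((∃ f : Module.End R V,
        (∀ (x : G) (hx : x ∈ H) (hx' : g * x * g⁻¹ ∈ H),
          σ ⟨g * x * g⁻¹, hx'⟩ * f = f * σ ⟨x, hx⟩) ∧ f ≠ 0) ↔
      ∃ Φ : G → Module.End R V, IsHeckeFun H σ Φ ∧ Φ g ≠ 0) := by
  refine ⟨⟨?mapsTo, ?injOn, ?surjOn⟩, fun _ _ => rfl, fun _ _ => rfl, ?_, ?_⟩
  case mapsTo =>
    rintro Φ ⟨⟨hΦ, -⟩, -⟩
    exact IsBiEquivariant.isIntertwiner hΦ g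
  case injOn =>
    rintro Φ₁ ⟨⟨hΦ₁, -⟩, hsupp₁⟩ Φ₂ ⟨⟨hΦ₂, -⟩, hsupp₂⟩ heq
    funext x
    by_cases hx : x ∈ doubleCoset H g
    · exact IsBiEquivariant.eqOn_doubleCoset hΦ₁ hΦ₂ heq hx
    · rw [not_imp_comm.1 (hsupp₁ x) hx, not_imp_comm.1 (hsupp₂ x) hx]
  case surjOn =>
    intro f (hf : IsIntertwiner H σ g f)
    exact ⟨heckeExtension H σ g f,
      ⟨hf.isHeckeFun_heckeExtension, fun _ => mem_doubleCoset_of_heckeExtension_ne_zero⟩,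
      heckeExtension_apply_self hf⟩
  · rintro ⟨f, hf, hne⟩
    exact ⟨heckeExtension H σ g f, IsIntertwiner.isHeckeFun_heckeExtension hf,
      (heckeExtension_apply_self hf).symm ▸ hne⟩
  · rintro ⟨Φ, ⟨hΦ, -⟩, hne⟩
    exact ⟨Φ g, IsBiEquivariant.isIntertwiner hΦ g, hne⟩
end

section
/- If V_σ is a finitely generated R-module, the map ξ: H_R(G,σ) → End_G(ind_H^G σ) given by ξ(Φ)(f)(g) = Σ_{x ∈ G/H} Φ(x) f(x⁻¹g) is an isomorphism of R-algebras, with inverse ξ⁻¹(θ)(g)(v) = θ(i_v)(g), where i_v ∈ ind_H^G σ is the function supported on H with i_v(h) = σ(h)v. -/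
open scoped BigOperators

/-- The compactly induced representation `ind_H^G σ`: functions `f : G → V` with
`f(hg) = σ(h) f(g)` whose support is contained in finitely many cosets `H s`. -/
def cind {G R V : Type*} [Group G] [CommRing R] [AddCommGroup V] [Module R V]
    (H : Subgroup G) (σ : ↥H →* Module.End R V) : Submodule R (G → V) where
  carrier := {f | (∀ (h : ↥H) (g : G), f (↑h * g) = σ h (f g)) ∧
    ∃ S : Finset G, ∀ g : G, f g ≠ 0 → ∃ s ∈ S, g * s⁻¹ ∈ H}
  add_mem' := by
    classical
    rintro f₁ f₂ ⟨e₁, S₁, hS₁⟩ ⟨e₂, S₂, hS₂⟩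
    refine ⟨fun h g => by simp [e₁, e₂], S₁ ∪ S₂, fun g hg => ?_⟩
    by_cases h1 : f₁ g = 0
    · obtain ⟨s, hs, hm⟩ := hS₂ g (fun h2 => hg (by simp [h1, h2]))
      exact ⟨s, Finset.mem_union_right _ hs, hm⟩
    · obtain ⟨s, hs, hm⟩ := hS₁ g h1
      exact ⟨s, Finset.mem_union_left _ hs, hm⟩
  zero_mem' := ⟨fun h g => by simp, ∅, fun g hg => absurd rfl hg⟩
  smul_mem' := by
    rintro r f ⟨e, S, hS⟩
    refine ⟨fun h g => by simp [e], S, fun g hg => hS g (fun h0 => hg (by simp [h0]))⟩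

/-- The map `ξ(Φ)(f)(g) = ∑_{x ∈ G/H} Φ(x) f(x⁻¹ g)`. -/
noncomputable def xiFun {G R V : Type*} [Group G] [CommRing R] [AddCommGroup V] [Module R V]
    (H : Subgroup G) (Φ : G → Module.End R V) (f : G → V) : G → V :=
  fun g => ∑ᶠ c : G ⧸ H, Φ (Quotient.out c) (f ((Quotient.out c)⁻¹ * g))

open Classical in
/-- The element `i_v` of `ind_H^G σ` supported on `H` with `i_v(h) = σ(h) v`. -/
noncomputable def ivFun {G R V : Type*} [Group G] [CommRing R] [AddCommGroup V] [Module R V]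
    (H : Subgroup G) (σ : ↥H →* Module.End R V) (v : V) : G → V :=
  fun g => if hg : g ∈ H then σ ⟨g, hg⟩ v else 0

/-!
Since a Hecke function `Φ` is supported on finitely many cosets `x H`, `ξ(Φ)(f)(g)` is a finite
sum, and by the bi-equivariance of `Φ` and the equivariance of `f` its summand `Φ(x) f(x⁻¹ g)`
only depends on `x H`. This makes `ξ(Φ)` linear in `f` and in `Φ`, lets one reindex the sum by
left translations of `G ⧸ H` (which gives `ξ(Φ)(f)(h g) = σ(h) ξ(Φ)(f)(g)` and the convolution
identity), and yields `ξ(Φ)(i_v)(g) = Φ(g) v`, hence injectivity.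

Conversely, every `f ∈ ind_H^G σ` is the finite sum `f = ∑ i_{f(s)}(· s⁻¹)` over representatives
`s` of the right cosets `H s` in its support, so a `G`-equivariant endomorphism `θ` is determined
by the `θ(i_v)`. The function `Φ(g)(v) = θ(i_v)(g)` is bi-equivariant, and it is supported on
finitely many double cosets because `V` is generated by finitely many `w`, each `θ(i_w)` being
supported on finitely many `H s`. Since `ξ(Φ)` and `θ` agree on the `i_v`, `θ = ξ(Φ)`.
-/

def HasFiniteDoubleCosets {G : Type*} [Group G] (H : Subgroup G) : Prop :=
  ∀ g : G, ((fun x : G => (QuotientGroup.mk x : G ⧸ H)) '' doubleCoset H g).Finite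

section

variable {G R V : Type*} [Group G] [CommRing R] [AddCommGroup V] [Module R V]
  {H : Subgroup G} {σ : ↥H →* Module.End R V}

lemma IsHeckeFun.apply_mul_coe {Φ : G → Module.End R V} (hΦ : IsHeckeFun H σ Φ) (x : G) (k : ↥H) :
    Φ (x * k) = Φ x * σ k := by
  simpa using hΦ.1 1 k x

lemma IsHeckeFun.apply_coe_mul {Φ : G → Module.End R V} (hΦ : IsHeckeFun H σ Φ) (h : ↥H) (x : G) :
    Φ (h * x) = σ h * Φ x := by
  simpa using hΦ.1 h 1 x

lemma IsHeckeFun.finite_support_out (hfin : HasFiniteDoubleCosets H)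
    {Φ : G → Module.End R V} (hΦ : IsHeckeFun H σ Φ) :
    (Function.support fun c : G ⧸ H => Φ c.out).Finite := by
  obtain ⟨S, hS⟩ := hΦ.2
  refine (S.finite_toSet.biUnion fun s _ => hfin s).subset fun c hc => ?_
  obtain ⟨s, hs, hcs⟩ := hS _ hc
  exact Set.mem_biUnion hs ⟨c.out, hcs, QuotientGroup.out_eq' c⟩

lemma xiFun_summand_congr {Φ : G → Module.End R V} (hΦ : ∀ (x : G) (k : ↥H), Φ (x * k) = Φ x * σ k)
    {f : G → V} (hf : ∀ (h : ↥H) (g : G), f (h * g) = σ h (f g))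
    {x y : G} (hxy : (x : G ⧸ H) = y) (g : G) :
    Φ y (f (y⁻¹ * g)) = Φ x (f (x⁻¹ * g)) := by
  obtain ⟨k, rfl⟩ : ∃ k : ↥H, y = x * k := ⟨⟨x⁻¹ * y, QuotientGroup.eq.1 hxy⟩, by simp⟩
  rw [hΦ, mul_inv_rev, mul_assoc, Module.End.mul_apply, ← InvMemClass.coe_inv, hf,
    ← Module.End.mul_apply (σ k), ← map_mul, mul_inv_cancel, map_one, Module.End.one_apply]

lemma xiFun_summand_mul_left {Φ : G → Module.End R V}
    (hΦ : ∀ (x : G) (k : ↥H), Φ (x * k) = Φ x * σ k)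
    {f : G → V} (hf : ∀ (h : ↥H) (g : G), f (h * g) = σ h (f g)) (a g : G) (c : G ⧸ H) :
    Φ (a * c.out) (f ((a * c.out)⁻¹ * g)) = Φ (a • c).out (f ((a • c).out⁻¹ * g)) := by
  refine xiFun_summand_congr hΦ hf ?_ g
  rw [QuotientGroup.out_eq']
  conv_lhs => rw [← QuotientGroup.out_eq' c]
  rfl

lemma finsum_xiFun_summand_mul_left {Φ : G → Module.End R V}
    (hΦ : ∀ (x : G) (k : ↥H), Φ (x * k) = Φ x * σ k)
    {f : G → V} (hf : ∀ (h : ↥H) (g : G), f (h * g) = σ h (f g)) (a g : G) :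
    ∑ᶠ c : G ⧸ H, Φ (a * c.out) (f ((a * c.out)⁻¹ * g)) = xiFun H Φ f g := by
  rw [finsum_congr (xiFun_summand_mul_left hΦ hf a g)]
  exact finsum_comp_equiv (MulAction.toPerm a : Equiv.Perm (G ⧸ H))
    (f := fun c => Φ c.out (f (c.out⁻¹ * g)))

lemma support_xiFun_summand_subset (Φ : G → Module.End R V) (f : G → V) (g : G) :
    (Function.support fun c : G ⧸ H => Φ c.out (f (c.out⁻¹ * g))) ⊆
      Function.support fun c : G ⧸ H => Φ c.out :=
  fun c hc h0 => hc (by simp [h0])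

noncomputable def xiLinearMap (Φ : G → Module.End R V)
    (hΦ : (Function.support fun c : G ⧸ H => Φ c.out).Finite) : (G → V) →ₗ[R] G → V where
  toFun := xiFun H Φ
  map_add' f₁ f₂ := funext fun g => by
    simp only [xiFun, Pi.add_apply, map_add]
    exact finsum_add_distrib (hΦ.subset (support_xiFun_summand_subset Φ f₁ g))
      (hΦ.subset (support_xiFun_summand_subset Φ f₂ g))
  map_smul' r f := funext fun g => by
    simp only [xiFun, Pi.smul_apply, map_smul, RingHom.id_apply]
    exact (smul_finsum' r (hΦ.subset (support_xiFun_summand_subset Φ f g))).symm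

lemma xiFun_add_left {Φ₁ Φ₂ : G → Module.End R V}
    (hΦ₁ : (Function.support fun c : G ⧸ H => Φ₁ c.out).Finite)
    (hΦ₂ : (Function.support fun c : G ⧸ H => Φ₂ c.out).Finite) (f : G → V) :
    xiFun H (Φ₁ + Φ₂) f = xiFun H Φ₁ f + xiFun H Φ₂ f := funext fun g => by
  simp only [xiFun, Pi.add_apply, LinearMap.add_apply]
  exact finsum_add_distrib (hΦ₁.subset (support_xiFun_summand_subset Φ₁ f g))
    (hΦ₂.subset (support_xiFun_summand_subset Φ₂ f g))

lemma xiFun_smul_left {Φ : G → Module.End R V}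
    (hΦ : (Function.support fun c : G ⧸ H => Φ c.out).Finite) (r : R) (f : G → V) :
    xiFun H (r • Φ) f = r • xiFun H Φ f := funext fun g => by
  simp only [xiFun, Pi.smul_apply, LinearMap.smul_apply]
  exact (smul_finsum' r (hΦ.subset (support_xiFun_summand_subset Φ f g))).symm

lemma xiFun_comp_mul_right (Φ : G → Module.End R V) (f : G → V) (x : G) :
    xiFun H Φ (fun g => f (g * x)) = fun g => xiFun H Φ f (g * x) := by
  funext g
  simp only [xiFun, mul_assoc]

lemma xiFun_apply_coe_mul {Φ : G → Module.End R V} (hfin : HasFiniteDoubleCosets H)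
    (hΦ : IsHeckeFun H σ Φ) {f : G → V} (hf : ∀ (h : ↥H) (g : G), f (h * g) = σ h (f g))
    (h : ↥H) (g : G) : xiFun H Φ f (h * g) = σ h (xiFun H Φ f g) := by
  have hsummand : ∀ c : G ⧸ H, Φ (h * c.out) (f ((h * c.out)⁻¹ * (h * g))) =
      σ h (Φ c.out (f (c.out⁻¹ * g))) := fun c => by
    rw [hΦ.apply_coe_mul, mul_inv_rev, mul_assoc, inv_mul_cancel_left, Module.End.mul_apply]
  rw [← finsum_xiFun_summand_mul_left hΦ.apply_mul_coe hf, finsum_congr hsummand, xiFun]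
  exact ((σ h).toAddMonoidHom.map_finsum
    ((hΦ.finite_support_out hfin).subset (support_xiFun_summand_subset Φ f g))).symm

lemma exists_finset_rightCoset_cover_doubleCoset (hfin : HasFiniteDoubleCosets H)
    (x : G) : ∃ T : Finset G, ∀ g ∈ doubleCoset H x, ∃ t ∈ T, g * t⁻¹ ∈ H := by
  classical
  -- `H x⁻¹ H` is a finite union of cosets `y H`, so `H x H` is covered by the cosets `H y⁻¹`.
  refine ⟨(hfin x⁻¹).toFinset.image fun q => q.out⁻¹, fun g ⟨h, hh, h', hh', hg⟩ => ?_⟩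
  have hg' : g⁻¹ ∈ doubleCoset H x⁻¹ := ⟨h'⁻¹, inv_mem hh', h⁻¹, inv_mem hh, by rw [hg]; group⟩
  refine ⟨((g⁻¹ : G) : G ⧸ H).out⁻¹,
    Finset.mem_image_of_mem _ ((hfin x⁻¹).mem_toFinset.2 ⟨_, hg', rfl⟩), ?_⟩
  simpa using inv_mem (QuotientGroup.eq.1 (QuotientGroup.out_eq' ((g⁻¹ : G) : G ⧸ H)))

lemma xiFun_mem_cind (hfin : HasFiniteDoubleCosets H)
    {Φ : G → Module.End R V} (hΦ : IsHeckeFun H σ Φ) {f : G → V} (hf : f ∈ cind H σ) :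
    xiFun H Φ f ∈ cind H σ := by
  classical
  obtain ⟨hfH, S, hS⟩ := hf
  choose T hT using exists_finset_rightCoset_cover_doubleCoset hfin
  refine ⟨xiFun_apply_coe_mul hfin hΦ hfH, (hΦ.finite_support_out hfin).toFinset.biUnion fun c =>
    S.biUnion fun s => (T c.out).image (· * s), fun g hg => ?_⟩
  obtain ⟨c, hc⟩ : ∃ c : G ⧸ H, Φ c.out (f (c.out⁻¹ * g)) ≠ 0 := by
    by_contra! hall
    exact hg (finsum_eq_zero_of_forall_eq_zero hall)
  obtain ⟨s, hs, hgs⟩ := hS _ fun h0 => hc (by rw [h0, map_zero])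
  have hcoset : g * s⁻¹ ∈ doubleCoset H c.out :=
    ⟨1, one_mem H, c.out⁻¹ * g * s⁻¹, by simpa only [mul_assoc] using hgs, by group⟩
  obtain ⟨t, ht, hgst⟩ := hT _ _ hcoset
  refine ⟨t * s, Finset.mem_biUnion.2 ⟨c, ?_, Finset.mem_biUnion.2
    ⟨s, hs, Finset.mem_image_of_mem _ ht⟩⟩, by rwa [mul_inv_rev, ← mul_assoc]⟩
  exact (hΦ.finite_support_out hfin).mem_toFinset.2 fun h0 =>
    hc (by simp only [h0, LinearMap.zero_apply])

lemma xiFun_heckeConv (hfin : HasFiniteDoubleCosets H)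
    {Φ₁ Φ₂ : G → Module.End R V} (hΦ₁ : (Function.support fun c : G ⧸ H => Φ₁ c.out).Finite)
    (hΦ₂ : IsHeckeFun H σ Φ₂) {f : G → V} (hf : ∀ (h : ↥H) (g : G), f (h * g) = σ h (f g)) :
    xiFun H (heckeConv H Φ₁ Φ₂) f = xiFun H Φ₁ (xiFun H Φ₂ f) := funext fun g => by
  have hconv : ∀ x, heckeConv H Φ₁ Φ₂ x = ∑ d ∈ hΦ₁.toFinset, Φ₁ d.out * Φ₂ (d.out⁻¹ * x) :=
    fun x => finsum_eq_sum_of_support_subset _ fun d hd =>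
      hΦ₁.mem_toFinset.2 fun h0 => hd (by simp [show Φ₁ d.out = 0 from h0])
  have hshift : ∀ d c : G ⧸ H, Φ₂ (d.out⁻¹ * c.out) (f (c.out⁻¹ * g)) =
      Φ₂ (d.out⁻¹ • c).out (f ((d.out⁻¹ • c).out⁻¹ * (d.out⁻¹ * g))) := fun d c => by
    rw [← xiFun_summand_mul_left hΦ₂.apply_mul_coe hf]
    simp only [mul_inv_rev, inv_inv, mul_assoc, mul_inv_cancel_left]
  have hinner : ∀ d : G ⧸ H, (∑ᶠ c : G ⧸ H, Φ₂ (d.out⁻¹ * c.out) (f (c.out⁻¹ * g))) =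
      xiFun H Φ₂ f (d.out⁻¹ * g) := fun d => by
    rw [← finsum_xiFun_summand_mul_left hΦ₂.apply_mul_coe hf d.out⁻¹]
    simp only [mul_inv_rev, inv_inv, mul_assoc, mul_inv_cancel_left]
  have hinner_finite : ∀ d : G ⧸ H,
      (Function.support fun c : G ⧸ H => Φ₂ (d.out⁻¹ * c.out) (f (c.out⁻¹ * g))).Finite :=
    fun d => ((hΦ₂.finite_support_out hfin).preimage (MulAction.injective d.out⁻¹).injOn).subset
      fun c hc h0 => hc (by simp [hshift d c, show Φ₂ (d.out⁻¹ • c).out = 0 from h0])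
  calc xiFun H (heckeConv H Φ₁ Φ₂) f g
      = ∑ᶠ c : G ⧸ H, ∑ d ∈ hΦ₁.toFinset, Φ₁ d.out (Φ₂ (d.out⁻¹ * c.out) (f (c.out⁻¹ * g))) := by
        simp only [xiFun, hconv, LinearMap.sum_apply, Module.End.mul_apply]
    _ = ∑ d ∈ hΦ₁.toFinset, ∑ᶠ c : G ⧸ H, Φ₁ d.out (Φ₂ (d.out⁻¹ * c.out) (f (c.out⁻¹ * g))) :=
        finsum_sum_comm _ _ fun d _ =>
          (hinner_finite d).subset fun c hc h0 => hc (by simp [show _ = (0 : V) from h0])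
    _ = ∑ d ∈ hΦ₁.toFinset, Φ₁ d.out (xiFun H Φ₂ f (d.out⁻¹ * g)) := by
        refine Finset.sum_congr rfl fun d _ => ?_
        rw [← hinner]
        exact ((Φ₁ d.out).toAddMonoidHom.map_finsum (hinner_finite d)).symm
    _ = xiFun H Φ₁ (xiFun H Φ₂ f) g :=
        (finsum_eq_sum_of_support_subset _ fun d hd =>
          hΦ₁.mem_toFinset.2 fun h0 => hd (by simp [show Φ₁ d.out = 0 from h0])).symm

lemma xiFun_heckeUnit {f : G → V} (hf : ∀ (h : ↥H) (g : G), f (h * g) = σ h (f g)) :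
    xiFun H (heckeUnit H σ) f = f := funext fun g => by
  have hout : ∀ c : G ⧸ H, c.out ∈ H ↔ c = ((1 : G) : G ⧸ H) := fun c => by
    conv_rhs => rw [← QuotientGroup.out_eq' c]
    rw [QuotientGroup.eq, mul_one, inv_mem_iff]
  rw [xiFun, finsum_eq_single _ ((1 : G) : G ⧸ H) fun c hc => by
    rw [heckeUnit, dif_neg ((hout c).not.2 hc), LinearMap.zero_apply]]
  have hmem := (hout _).2 rfl
  rw [heckeUnit, dif_pos hmem, ← InvMemClass.coe_inv (x := ⟨_, hmem⟩), hf, ← Module.End.mul_apply,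
    ← map_mul, mul_inv_cancel, map_one, Module.End.one_apply]

lemma ivFun_of_mem (v : V) {g : G} (hg : g ∈ H) : ivFun H σ v g = σ ⟨g, hg⟩ v := dif_pos hg

lemma ivFun_of_notMem (v : V) {g : G} (hg : g ∉ H) : ivFun H σ v g = 0 := dif_neg hg

lemma ivFun_mem_cind (v : V) : ivFun H σ v ∈ cind H σ := by
  refine ⟨fun h g => ?_, {1}, fun g hg => ⟨1, Finset.mem_singleton_self 1, ?_⟩⟩
  · by_cases hg : g ∈ H
    · rw [ivFun_of_mem v hg, ivFun_of_mem v (mul_mem h.2 hg), ← Module.End.mul_apply, ← map_mul]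
      rfl
    · rw [ivFun_of_notMem v hg, ivFun_of_notMem v ((Subgroup.mul_mem_cancel_left H h.2).not.2 hg),
        map_zero]
  · by_contra hgH
    exact hg (ivFun_of_notMem v (by simpa using hgH))

lemma ivFun_apply_mul_right (v : V) (k : ↥H) (g : G) :
    ivFun H σ v (g * k) = ivFun H σ (σ k v) g := by
  by_cases hg : g ∈ H
  · rw [ivFun_of_mem v (mul_mem hg k.2), ivFun_of_mem _ hg, ← Module.End.mul_apply, ← map_mul]
    rfl
  · rw [ivFun_of_notMem v ((Subgroup.mul_mem_cancel_right H k.2).not.2 hg), ivFun_of_notMem _ hg]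

noncomputable def ivCind : V →ₗ[R] cind H σ where
  toFun v := ⟨ivFun H σ v, ivFun_mem_cind v⟩
  map_add' v w := Subtype.ext <| funext fun g => by
    by_cases hg : g ∈ H <;> simp [ivFun, hg]
  map_smul' r v := Subtype.ext <| funext fun g => by
    by_cases hg : g ∈ H <;> simp [ivFun, hg]

lemma xiFun_ivFun {Φ : G → Module.End R V} (hΦ : ∀ (x : G) (k : ↥H), Φ (x * k) = Φ x * σ k)
    (v : V) (g : G) : xiFun H Φ (ivFun H σ v) g = Φ g v := by
  rw [xiFun, finsum_eq_single _ (g : G ⧸ H) fun c hc => by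
    rw [ivFun_of_notMem v fun hmem => hc ?_, map_zero]
    rw [← QuotientGroup.out_eq' c, QuotientGroup.eq]
    exact hmem]
  rw [← xiFun_summand_congr hΦ (ivFun_mem_cind v).1 (QuotientGroup.out_eq' (g : G ⧸ H)),
    inv_mul_cancel, ivFun_of_mem v (one_mem H)]
  exact congrArg (Φ g) (LinearMap.congr_fun (map_one σ) v)

lemma comp_mul_right_mem_cind {f : G → V} (hf : f ∈ cind H σ) (x : G) :
    (fun g => f (g * x)) ∈ cind H σ := by
  classical
  obtain ⟨hfH, S, hS⟩ := hf
  refine ⟨fun h g => by simp only [mul_assoc, hfH], S.image (· * x⁻¹), fun g hg => ?_⟩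
  obtain ⟨s, hs, hgs⟩ := hS (g * x) hg
  exact ⟨s * x⁻¹, Finset.mem_image_of_mem _ hs, by simpa [mul_assoc] using hgs⟩

open Classical in
lemma ivFun_apply_mul_inv_out {f : G → V} (hf : ∀ (h : ↥H) (g : G), f (h * g) = σ h (f g))
    (q : Quotient (QuotientGroup.rightRel H)) (g : G) :
    ivFun H σ (f q.out) (g * q.out⁻¹) = if Quotient.mk _ g = q then f g else 0 := by
  have hq : g * q.out⁻¹ ∈ H ↔ Quotient.mk _ g = q := by
    conv_rhs => rw [← Quotient.out_eq q]
    rw [Quotient.eq, QuotientGroup.rightRel_apply, ← inv_mem_iff, mul_inv_rev, inv_inv]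
  split_ifs with hgq
  · rw [ivFun_of_mem _ (hq.2 hgq), ← hf]
    simp
  · exact ivFun_of_notMem _ (hq.not.2 hgq)

lemma exists_finset_eq_sum_ivFun {f : G → V} (hf : f ∈ cind H σ) :
    ∃ Q : Finset (Quotient (QuotientGroup.rightRel H)),
      ∀ g, f g = ∑ q ∈ Q, ivFun H σ (f q.out) (g * q.out⁻¹) := by
  classical
  obtain ⟨hfH, S, hS⟩ := hf
  refine ⟨S.image (Quotient.mk _), fun g => ?_⟩
  simp only [ivFun_apply_mul_inv_out hfH, Finset.sum_ite_eq]
  split_ifs with hg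
  · rfl
  · by_contra hne
    obtain ⟨s, hs, hgs⟩ := hS g hne
    exact hg (Finset.mem_image.2 ⟨s, hs, Quotient.sound (QuotientGroup.rightRel_apply.2 hgs)⟩)

def IsCindEquivariant (θ : cind H σ →ₗ[R] cind H σ) : Prop :=
  ∀ (x : G) (f f' : cind H σ), (∀ g : G, (f' : G → V) g = (f : G → V) (g * x)) →
    ∀ g : G, (θ f' : G → V) g = (θ f : G → V) (g * x)

lemma exists_finset_forall_isCindEquivariant_apply_eq_sum (f : cind H σ) :
    ∃ Q : Finset (Quotient (QuotientGroup.rightRel H)),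
      ∀ θ : cind H σ →ₗ[R] cind H σ, IsCindEquivariant θ → ∀ g,
        (θ f : G → V) g = ∑ q ∈ Q, (θ (ivCind ((f : G → V) q.out)) : G → V) (g * q.out⁻¹) := by
  obtain ⟨Q, hQ⟩ := exists_finset_eq_sum_ivFun f.2
  let φ (q : Quotient (QuotientGroup.rightRel H)) : cind H σ :=
    ⟨fun g => ivFun H σ ((f : G → V) q.out) (g * q.out⁻¹),
      comp_mul_right_mem_cind (ivFun_mem_cind _) _⟩
  have hf : f = ∑ q ∈ Q, φ q :=
    Subtype.ext <| funext fun g => by rw [hQ g, Submodule.coe_sum, Finset.sum_apply]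
  refine ⟨Q, fun θ hθ g => ?_⟩
  have hθf : θ f = ∑ q ∈ Q, θ (φ q) := by rw [← map_sum, ← hf]
  rw [hθf, Submodule.coe_sum, Finset.sum_apply]
  exact Finset.sum_congr rfl fun q _ => hθ q.out⁻¹ _ (φ q) (fun _ => rfl) g

lemma IsCindEquivariant.ext {θ₁ θ₂ : cind H σ →ₗ[R] cind H σ} (hθ₁ : IsCindEquivariant θ₁)
    (hθ₂ : IsCindEquivariant θ₂) (h : ∀ v, θ₁ (ivCind v) = θ₂ (ivCind v)) : θ₁ = θ₂ :=
  LinearMap.ext fun f => Subtype.ext <| funext fun g => by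
    obtain ⟨Q, hQ⟩ := exists_finset_forall_isCindEquivariant_apply_eq_sum f
    simp only [hQ θ₁ hθ₁, hQ θ₂ hθ₂, h]

noncomputable def xiEnd (hfin : HasFiniteDoubleCosets H)
    {Φ : G → Module.End R V} (hΦ : IsHeckeFun H σ Φ) : cind H σ →ₗ[R] cind H σ :=
  (xiLinearMap Φ (hΦ.finite_support_out hfin)).restrict fun _ hf => xiFun_mem_cind hfin hΦ hf

lemma isCindEquivariant_xiEnd (hfin : HasFiniteDoubleCosets H)
    {Φ : G → Module.End R V} (hΦ : IsHeckeFun H σ Φ) : IsCindEquivariant (xiEnd hfin hΦ) :=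
  fun x f f' hf' g => by
    change xiFun H Φ f' g = xiFun H Φ f (g * x)
    rw [show (f' : G → V) = fun g => (f : G → V) (g * x) from funext hf', xiFun_comp_mul_right]

noncomputable def heckeFunOf (θ : cind H σ →ₗ[R] cind H σ) (g : G) : Module.End R V :=
  LinearMap.proj g ∘ₗ (cind H σ).subtype ∘ₗ θ ∘ₗ ivCind

lemma heckeFunOf_apply (θ : cind H σ →ₗ[R] cind H σ) (g : G) (v : V) :
    heckeFunOf θ g v = (θ (ivCind v) : G → V) g := rfl

lemma isHeckeFun_heckeFunOf [Module.Finite R V] {θ : cind H σ →ₗ[R] cind H σ}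
    (hθ : IsCindEquivariant θ) : IsHeckeFun H σ (heckeFunOf θ) := by
  classical
  refine ⟨fun h h' g => LinearMap.ext fun v => ?_, ?_⟩
  · have hright : (θ (ivCind (σ h' v)) : G → V) g = (θ (ivCind v) : G → V) (g * h') :=
      hθ h' _ _ (fun g => (ivFun_apply_mul_right v h' g).symm) g
    rw [heckeFunOf_apply, mul_assoc, (θ (ivCind v)).2.1, ← hright]
    rfl
  · obtain ⟨sV, hsV⟩ := Module.Finite.fg_top (R := R) (M := V)
    choose T hT using fun w : V => (θ (ivCind w)).2.2
    refine ⟨sV.biUnion T, fun g hg => ?_⟩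
    obtain ⟨w, hw, hgw⟩ : ∃ w ∈ sV, heckeFunOf θ g w ≠ 0 := by
      by_contra! hall
      exact hg (LinearMap.ext_on hsV fun w hw => by simpa using hall w hw)
    obtain ⟨s, hs, hgs⟩ := hT w g hgw
    exact ⟨s, Finset.mem_biUnion.2 ⟨w, hw, hs⟩, g * s⁻¹, hgs, 1, one_mem H, by group⟩

lemma eq_xiEnd_heckeFunOf [Module.Finite R V] (hfin : HasFiniteDoubleCosets H)
    {θ : cind H σ →ₗ[R] cind H σ} (hθ : IsCindEquivariant θ) :
    θ = xiEnd hfin (isHeckeFun_heckeFunOf hθ) :=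
  hθ.ext (isCindEquivariant_xiEnd hfin _) fun v => Subtype.ext <| funext fun g =>
    (xiFun_ivFun (isHeckeFun_heckeFunOf hθ).apply_mul_coe v g).symm

end

theorem statement3_general {G R V : Type*} [Group G]
    [CommRing R] [AddCommGroup V] [Module R V] [Module.Finite R V]
    (H : Subgroup G)
    (hfin : ∀ g : G, ((fun x : G => (QuotientGroup.mk x : G ⧸ H)) '' doubleCoset H g).Finite)
    (σ : ↥H →* Module.End R V) :
    -- `ξ(Φ)` preserves `ind_H^G σ`
    (∀ Φ, IsHeckeFun H σ Φ → ∀ f ∈ cind H σ, xiFun H Φ f ∈ cind H σ) ∧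
    -- `ξ(Φ)` is `G`-equivariant
    (∀ Φ, IsHeckeFun H σ Φ → ∀ f ∈ cind H σ, ∀ x : G,
        xiFun H Φ (fun g => f (g * x)) = fun g => xiFun H Φ f (g * x)) ∧
    -- `ξ(Φ)` is `R`-linear on `ind_H^G σ`
    (∀ Φ, IsHeckeFun H σ Φ → ∀ f₁ ∈ cind H σ, ∀ f₂ ∈ cind H σ,
        xiFun H Φ (f₁ + f₂) = xiFun H Φ f₁ + xiFun H Φ f₂) ∧
    (∀ Φ, IsHeckeFun H σ Φ → ∀ f ∈ cind H σ, ∀ r : R,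
        xiFun H Φ (r • f) = r • xiFun H Φ f) ∧
    -- `ξ` is an `R`-algebra homomorphism
    (∀ Φ₁ Φ₂, IsHeckeFun H σ Φ₁ → IsHeckeFun H σ Φ₂ → ∀ f ∈ cind H σ,
        xiFun H (heckeConv H Φ₁ Φ₂) f = xiFun H Φ₁ (xiFun H Φ₂ f)) ∧
    (∀ Φ₁ Φ₂, IsHeckeFun H σ Φ₁ → IsHeckeFun H σ Φ₂ → ∀ f ∈ cind H σ,
        xiFun H (Φ₁ + Φ₂) f = xiFun H Φ₁ f + xiFun H Φ₂ f) ∧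
    (∀ Φ, IsHeckeFun H σ Φ → ∀ f ∈ cind H σ, ∀ r : R,
        xiFun H (r • Φ) f = r • xiFun H Φ f) ∧
    (∀ f ∈ cind H σ, xiFun H (heckeUnit H σ) f = f) ∧
    -- `ξ` is injective
    (∀ Φ₁ Φ₂, IsHeckeFun H σ Φ₁ → IsHeckeFun H σ Φ₂ →
        (∀ f ∈ cind H σ, xiFun H Φ₁ f = xiFun H Φ₂ f) → Φ₁ = Φ₂) ∧
    -- `ξ` is surjective onto `End_G(ind_H^G σ)`, with inverse `θ ↦ (g ↦ (v ↦ θ(i_v)(g)))`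
    (∀ θ : ↥(cind H σ) →ₗ[R] ↥(cind H σ),
        (∀ (x : G) (f f' : ↥(cind H σ)), (∀ g : G, (f' : G → V) g = (f : G → V) (g * x)) →
          ∀ g : G, (↑(θ f') : G → V) g = (↑(θ f) : G → V) (g * x)) →
        ∃ Φ, IsHeckeFun H σ Φ ∧
          (∀ (f : ↥(cind H σ)) (g : G), (↑(θ f) : G → V) g = xiFun H Φ (↑f) g) ∧
          (∀ (g : G) (v : V) (f : ↥(cind H σ)),
            (f : G → V) = ivFun H σ v → Φ g v = (↑(θ f) : G → V) g)) := by
  refine ⟨fun Φ hΦ f hf => xiFun_mem_cind hfin hΦ hf,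
    fun Φ _ f _ x => xiFun_comp_mul_right Φ f x,
    fun Φ hΦ f₁ _ f₂ _ => (xiLinearMap Φ (hΦ.finite_support_out hfin)).map_add f₁ f₂,
    fun Φ hΦ f _ r => (xiLinearMap Φ (hΦ.finite_support_out hfin)).map_smul r f,
    fun Φ₁ Φ₂ hΦ₁ hΦ₂ f hf => xiFun_heckeConv hfin (hΦ₁.finite_support_out hfin) hΦ₂ hf.1,
    fun Φ₁ Φ₂ hΦ₁ hΦ₂ f _ =>
      xiFun_add_left (hΦ₁.finite_support_out hfin) (hΦ₂.finite_support_out hfin) f,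
    fun Φ hΦ f _ r => xiFun_smul_left (hΦ.finite_support_out hfin) r f,
    fun f hf => xiFun_heckeUnit hf.1,
    fun Φ₁ Φ₂ hΦ₁ hΦ₂ hξ => ?_, fun θ hθ => ?_⟩
  · funext g
    refine LinearMap.ext fun v => ?_
    rw [← xiFun_ivFun hΦ₁.apply_mul_coe, ← xiFun_ivFun hΦ₂.apply_mul_coe, hξ _ (ivFun_mem_cind v)]
  · refine ⟨heckeFunOf θ, isHeckeFun_heckeFunOf hθ, fun f g => ?_, fun g v f hf => ?_⟩
    · exact congrArg (fun φ => (φ f : G → V) g) (eq_xiEnd_heckeFunOf hfin hθ)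
    · rw [heckeFunOf_apply, show f = ivCind v from Subtype.ext hf]

/-- If `V_σ` is finitely generated, `ξ : H_R(G,σ) → End_G(ind_H^G σ)`,
`ξ(Φ)(f)(g) = ∑_{x ∈ G/H} Φ(x) f(x⁻¹g)`, is an isomorphism of `R`-algebras, with inverse
`ξ⁻¹(θ)(g)(v) = θ(i_v)(g)`. -/
theorem statement3 {G R V : Type*} [Group G] [TopologicalSpace G] [IsTopologicalGroup G]
    [CommRing R] [AddCommGroup V] [Module R V] [Module.Finite R V]
    (H : Subgroup G) (hHopen : IsOpen (H : Set G))
    (hfin : ∀ g : G, ((fun x : G => (QuotientGroup.mk x : G ⧸ H)) '' doubleCoset H g).Finite)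
    (σ : ↥H →* Module.End R V)
    (hsmooth : ∀ v : V, IsOpen {h : ↥H | σ h v = v}) :
    -- `ξ(Φ)` preserves `ind_H^G σ`
    (∀ Φ, IsHeckeFun H σ Φ → ∀ f ∈ cind H σ, xiFun H Φ f ∈ cind H σ) ∧
    -- `ξ(Φ)` is `G`-equivariant
    (∀ Φ, IsHeckeFun H σ Φ → ∀ f ∈ cind H σ, ∀ x : G,
        xiFun H Φ (fun g => f (g * x)) = fun g => xiFun H Φ f (g * x)) ∧
    -- `ξ(Φ)` is `R`-linear on `ind_H^G σ`
    (∀ Φ, IsHeckeFun H σ Φ → ∀ f₁ ∈ cind H σ, ∀ f₂ ∈ cind H σ,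
        xiFun H Φ (f₁ + f₂) = xiFun H Φ f₁ + xiFun H Φ f₂) ∧
    (∀ Φ, IsHeckeFun H σ Φ → ∀ f ∈ cind H σ, ∀ r : R,
        xiFun H Φ (r • f) = r • xiFun H Φ f) ∧
    -- `ξ` is an `R`-algebra homomorphism
    (∀ Φ₁ Φ₂, IsHeckeFun H σ Φ₁ → IsHeckeFun H σ Φ₂ → ∀ f ∈ cind H σ,
        xiFun H (heckeConv H Φ₁ Φ₂) f = xiFun H Φ₁ (xiFun H Φ₂ f)) ∧
    (∀ Φ₁ Φ₂, IsHeckeFun H σ Φ₁ → IsHeckeFun H σ Φ₂ → ∀ f ∈ cind H σ,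
        xiFun H (Φ₁ + Φ₂) f = xiFun H Φ₁ f + xiFun H Φ₂ f) ∧
    (∀ Φ, IsHeckeFun H σ Φ → ∀ f ∈ cind H σ, ∀ r : R,
        xiFun H (r • Φ) f = r • xiFun H Φ f) ∧
    (∀ f ∈ cind H σ, xiFun H (heckeUnit H σ) f = f) ∧
    -- `ξ` is injective
    (∀ Φ₁ Φ₂, IsHeckeFun H σ Φ₁ → IsHeckeFun H σ Φ₂ →
        (∀ f ∈ cind H σ, xiFun H Φ₁ f = xiFun H Φ₂ f) → Φ₁ = Φ₂) ∧
    -- `ξ` is surjective onto `End_G(ind_H^G σ)`, with inverse `θ ↦ (g ↦ (v ↦ θ(i_v)(g)))`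
    (∀ θ : ↥(cind H σ) →ₗ[R] ↥(cind H σ),
        (∀ (x : G) (f f' : ↥(cind H σ)), (∀ g : G, (f' : G → V) g = (f : G → V) (g * x)) →
          ∀ g : G, (↑(θ f') : G → V) g = (↑(θ f) : G → V) (g * x)) →
        ∃ Φ, IsHeckeFun H σ Φ ∧
          (∀ (f : ↥(cind H σ)) (g : G), (↑(θ f) : G → V) g = xiFun H Φ (↑f) g) ∧
          (∀ (g : G) (v : V) (f : ↥(cind H σ)),
            (f : G → V) = ivFun H σ v → Φ g v = (↑(θ f) : G → V) g)) :=
  statement3_general H hfin σ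
end

section
/- Let λ = κ ⊗ id: for each j ∈ J write an element f̃ of H_R(J,η) as f̃(j) = Φ(j)κ(j). The map Θ': H_R(K_B,K¹_B) → H_R(J,η), Φ ↦ Φ⊗κ (i.e. (Φ⊗κ)(j) = Φ(j)κ(j)), is an isomorphism of R-algebras, where H_R(K_B,K¹_B) is identified with the group algebra R[J/J¹] ≅ R[K_B/K¹_B]. -/
open scoped BigOperators

/-- Elements of the scalar Hecke algebra `H_R(K_B, K¹_B) ≅ R[J/J¹]`: `J¹`-bi-invariant
`R`-valued functions on `J` supported on finitely many double cosets. -/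
def IsScalarHeckeFun {G R : Type*} [Group G] [CommRing R]
    (H : Subgroup G) (Φ : G → R) : Prop :=
  (∀ (h h' : ↥H) (g : G), Φ (↑h * g * ↑h') = Φ g) ∧
  ∃ S : Finset G, ∀ g : G, Φ g ≠ 0 → ∃ s ∈ S, g ∈ doubleCoset H s

/-- Convolution of scalar Hecke functions. -/
noncomputable def scalarConv {G R : Type*} [Group G] [CommRing R]
    (H : Subgroup G) (Φ₁ Φ₂ : G → R) : G → R :=
  fun g => ∑ᶠ c : G ⧸ H, Φ₁ (Quotient.out c) * Φ₂ ((Quotient.out c)⁻¹ * g)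

/-!
Bi-equivariance of `f ∈ H_R(J, η)` says precisely that `f j` intertwines `η` with its
`j`-conjugate, so by hypothesis `f j = Φ j • κ j`; since `κ j` is invertible the scalar `Φ j` is
unique, and it inherits bi-invariance and finite support from `f`. Multiplicativity is the
identity `κ x * κ (x⁻¹ * g) = κ g` inside each term of the convolution.
-/

namespace Hecke

variable {G R V : Type*} [Group G] [AddCommGroup V]

section CommRing

variable [CommRing R] [Module R V]

/-- The map `Φ ↦ Φ ⊗ ρ` from scalar functions to `End_R(V)`-valued ones. -/
def twist (ρ : G →* Module.End R V) (Φ : G → R) : G → Module.End R V :=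
  fun g => Φ g • ρ g

variable {H : Subgroup G} {ρ : G →* Module.End R V} {σ : ↥H →* Module.End R V}

lemma map_mul_mul_of_restrict (hres : ∀ x : ↥H, ρ x = σ x) (h h' : ↥H) (g : G) :
    ρ (↑h * g * ↑h') = σ h * ρ g * σ h' := by
  rw [map_mul, map_mul, hres, hres]

lemma isHeckeFun_twist (hres : ∀ x : ↥H, ρ x = σ x) {Φ : G → R}
    (hΦ : IsScalarHeckeFun H Φ) : IsHeckeFun H σ (twist ρ Φ) := by
  obtain ⟨hinv, S, hS⟩ := hΦ
  refine ⟨fun h h' g => ?_, S, fun g hg => hS g fun h0 => hg ?_⟩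
  · simp only [twist]
    rw [hinv, map_mul_mul_of_restrict hres, mul_smul_comm, smul_mul_assoc]
  · simp only [twist, h0, zero_smul]

lemma isHeckeFun_apply_intertwines {f : G → Module.End R V} (hf : IsHeckeFun H σ f) (j x : G)
    (hx : x ∈ H) (hx' : j * x * j⁻¹ ∈ H) :
    σ ⟨j * x * j⁻¹, hx'⟩ * f j = f j * σ ⟨x, hx⟩ := by
  have hleft := hf.1 ⟨j * x * j⁻¹, hx'⟩ 1 j
  have hright := hf.1 1 ⟨x, hx⟩ j
  simp only [OneMemClass.coe_one, map_one, mul_one, one_mul] at hleft hright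
  rw [← hleft, ← hright, inv_mul_cancel_right]

end CommRing

section Field

variable [Field R] [Module R V] {H : Subgroup G} {ρ : G →* Module.End R V}
  {σ : ↥H →* Module.End R V}

lemma heckeConv_twist (Φ₁ Φ₂ : G → R) :
    heckeConv H (twist ρ Φ₁) (twist ρ Φ₂) = twist ρ (scalarConv H Φ₁ Φ₂) := by
  funext g
  simp only [heckeConv, scalarConv, twist, finsum_smul]
  refine finsum_congr fun c => ?_
  rw [smul_mul_smul_comm, ← map_mul, mul_inv_cancel_left]

variable [Nontrivial V]

lemma rep_apply_ne_zero (ρ : G →* Module.End R V) (g : G) : ρ g ≠ 0 :=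
  ((Group.isUnit g).map ρ).ne_zero

lemma smul_rep_apply_injective (ρ : G →* Module.End R V) (g : G) :
    Function.Injective fun c : R => c • ρ g :=
  smul_left_injective R (rep_apply_ne_zero ρ g)

lemma twist_injective (ρ : G →* Module.End R V) : Function.Injective (twist ρ) :=
  fun _ _ h => funext fun g => smul_rep_apply_injective ρ g (congrFun h g)

lemma isScalarHeckeFun_of_isHeckeFun_twist (hres : ∀ x : ↥H, ρ x = σ x) {Φ : G → R}
    (hΦ : IsHeckeFun H σ (twist ρ Φ)) : IsScalarHeckeFun H Φ := by
  obtain ⟨hequiv, S, hS⟩ := hΦ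
  refine ⟨fun h h' g => smul_rep_apply_injective ρ (↑h * g * ↑h') ?_, S, fun g hg => hS g ?_⟩
  · have := hequiv h h' g
    simp only [twist] at this ⊢
    rw [this, map_mul_mul_of_restrict hres, mul_smul_comm, smul_mul_assoc]
  · simpa [twist] using And.intro hg (rep_apply_ne_zero ρ g)

end Field

end Hecke

open Hecke in
theorem statement15_general {J R Vη : Type*} [Group J] [Field R]
    [AddCommGroup Vη] [Module R Vη] [Nontrivial Vη]
    (J1 : Subgroup J)
    (κ : J →* Module.End R Vη) (η : ↥J1 →* Module.End R Vη)
    (hres : ∀ x : ↥J1, κ (x : J) = η x)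
    (hdim1 : ∀ (j : J) (f : Module.End R Vη),
      (∀ (x : J) (hx : x ∈ J1) (hx' : j * x * j⁻¹ ∈ J1),
        η ⟨j * x * j⁻¹, hx'⟩ * f = f * η ⟨x, hx⟩) →
      ∃ c : R, f = c • κ j) :
    -- `Θ'` maps into `H_R(J, η)`
    (∀ Φ : J → R, IsScalarHeckeFun J1 Φ → IsHeckeFun J1 η (fun j => Φ j • κ j)) ∧
    -- `Θ'` is multiplicative
    (∀ Φ₁ Φ₂ : J → R, IsScalarHeckeFun J1 Φ₁ → IsScalarHeckeFun J1 Φ₂ →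
      (fun j => scalarConv J1 Φ₁ Φ₂ j • κ j) =
        heckeConv J1 (fun j => Φ₁ j • κ j) (fun j => Φ₂ j • κ j)) ∧
    -- `Θ'` is `R`-linear
    (∀ Φ₁ Φ₂ : J → R,
      (fun j => (Φ₁ j + Φ₂ j) • κ j) = (fun j => Φ₁ j • κ j) + fun j => Φ₂ j • κ j) ∧
    (∀ (r : R) (Φ : J → R),
      (fun j => (r * Φ j) • κ j) = r • fun j => Φ j • κ j) ∧
    -- `Θ'` is injective
    (∀ Φ₁ Φ₂ : J → R, IsScalarHeckeFun J1 Φ₁ → IsScalarHeckeFun J1 Φ₂ →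
      (fun j => Φ₁ j • κ j) = (fun j => Φ₂ j • κ j) → Φ₁ = Φ₂) ∧
    -- `Θ'` is surjective onto `H_R(J, η)`
    (∀ f : J → Module.End R Vη, IsHeckeFun J1 η f →
      ∃ Φ : J → R, IsScalarHeckeFun J1 Φ ∧ f = fun j => Φ j • κ j) := by
  have hsurj : ∀ f : J → Module.End R Vη, IsHeckeFun J1 η f →
      ∃ Φ : J → R, IsScalarHeckeFun J1 Φ ∧ f = twist κ Φ := by
    intro f hf
    choose Φ hΦ using fun j => hdim1 j (f j) (isHeckeFun_apply_intertwines hf j)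
    obtain rfl : f = twist κ Φ := funext hΦ
    exact ⟨Φ, isScalarHeckeFun_of_isHeckeFun_twist hres hf, rfl⟩
  refine ⟨fun _ => isHeckeFun_twist hres, fun Φ₁ Φ₂ _ _ => (heckeConv_twist Φ₁ Φ₂).symm,
    fun _ _ => funext fun _ => add_smul _ _ _, fun _ _ => funext fun _ => mul_smul _ _ _,
    fun _ _ _ _ h => twist_injective κ h, hsurj⟩

/-- Let `J` be a group with normal subgroup `J¹` of finite index, `η` an irreducible
representation of `J¹` over an algebraically closed field `R` extending to a
representation `κ` of `J` such that each intertwining space `I_j(η)` is spanned by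
`κ(j)`.  Then `Θ' : H_R(K_B, K¹_B) ≅ R[J/J¹] → H_R(J, η)`, `Φ ↦ Φ ⊗ κ` (i.e.
`(Φ ⊗ κ)(j) = Φ(j) κ(j)`), is an isomorphism of `R`-algebras. -/
theorem statement15 {J R Vη : Type*} [Group J] [Field R] [IsAlgClosed R]
    [AddCommGroup Vη] [Module R Vη] [Nontrivial Vη]
    (J1 : Subgroup J) [J1.Normal] [Finite (J ⧸ J1)]
    (κ : J →* Module.End R Vη) (η : ↥J1 →* Module.End R Vη)
    (hres : ∀ x : ↥J1, κ (x : J) = η x)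
    (hirr : ∀ U : Submodule R Vη, (∀ (x : ↥J1), ∀ v ∈ U, η x v ∈ U) → U = ⊥ ∨ U = ⊤)
    (hdim1 : ∀ (j : J) (f : Module.End R Vη),
      (∀ (x : J) (hx : x ∈ J1) (hx' : j * x * j⁻¹ ∈ J1),
        η ⟨j * x * j⁻¹, hx'⟩ * f = f * η ⟨x, hx⟩) →
      ∃ c : R, f = c • κ j) :
    -- `Θ'` maps into `H_R(J, η)`
    (∀ Φ : J → R, IsScalarHeckeFun J1 Φ → IsHeckeFun J1 η (fun j => Φ j • κ j)) ∧
    -- `Θ'` is multiplicative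
    (∀ Φ₁ Φ₂ : J → R, IsScalarHeckeFun J1 Φ₁ → IsScalarHeckeFun J1 Φ₂ →
      (fun j => scalarConv J1 Φ₁ Φ₂ j • κ j) =
        heckeConv J1 (fun j => Φ₁ j • κ j) (fun j => Φ₂ j • κ j)) ∧
    -- `Θ'` is `R`-linear
    (∀ Φ₁ Φ₂ : J → R,
      (fun j => (Φ₁ j + Φ₂ j) • κ j) = (fun j => Φ₁ j • κ j) + fun j => Φ₂ j • κ j) ∧
    (∀ (r : R) (Φ : J → R),
      (fun j => (r * Φ j) • κ j) = r • fun j => Φ j • κ j) ∧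
    -- `Θ'` is injective
    (∀ Φ₁ Φ₂ : J → R, IsScalarHeckeFun J1 Φ₁ → IsScalarHeckeFun J1 Φ₂ →
      (fun j => Φ₁ j • κ j) = (fun j => Φ₂ j • κ j) → Φ₁ = Φ₂) ∧
    -- `Θ'` is surjective onto `H_R(J, η)`
    (∀ f : J → Module.End R Vη, IsHeckeFun J1 η f →
      ∃ Φ : J → R, IsScalarHeckeFun J1 Φ ∧ f = fun j => Φ j • κ j) :=
  statement15_general J1 κ η hres hdim1
end

section
/- In GL_{m'}(A(E)), let Δ be the monoid of diagonal matrices diag(ϖ^{a₁},…,ϖ^{a_{m'}}) with 0 ≤ a₁ ≤ … ≤ a_{m'}, Z the group of upper unitriangular matrices with strictly-upper entries in ϖ⁻¹P(E), Ĩ¹ the group of matrices with diagonal entries in 1+P(E), above-diagonal entries in A(E)'s order 𝔄(E) and below-diagonal entries in P(E), and 𝐖 = W ⋉ Δ̂ the group of monomial matrices with entries in ϖ^ℤ times units. If τ ∈ Δ and z ∈ Z satisfy Ĩ¹ τ z Ĩ¹ ∩ 𝐖 ≠ ∅, then Ĩ¹ τ z Ĩ¹ ∩ 𝐖 = {τ}.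 -/
/-!
Write `U = τ z` and suppose `x U y = M` with `x, y ∈ Ĩ¹` and `M ∈ 𝐖`, say `M e_j = ϖ^{b_j} e_{w j}`.
Every element of `Ĩ¹` has a right inverse in `Ĩ¹` (eliminate the unit entry `y₀₀ ∈ 1 + P` and
recurse on its Schur complement), so `x U = M y⁻¹`. Put `e = v ϖ` and `r = w⁻¹ 0`. Row `0` of
`x U` has valuations `≥ (a₀ - 1) e + 1` everywhere (`a` is increasing and `ϖ z` is integral above
the diagonal) and exactly `a₀ e` at `(0, 0)`; row `0` of `M y⁻¹` is `ϖ^{b_r}` times row `r` of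
`y⁻¹`. The diagonal entry `(0, r)` gives `b_r ≥ a₀`, and then the entry `(0, 0)` rules out
`r > 0`, where `y⁻¹_{r0} ∈ P`; so `w 0 = 0` and `b₀ = a₀`. Taking the Schur complement of `x₀₀`
turns `x U y = M` into the same equation of size `m' - 1`, and induction gives `M = τ`.
-/

/-- The monoid `Δ` of diagonal matrices `diag(ϖ^{a₁},…,ϖ^{a_{m'}})` with
`0 ≤ a₁ ≤ ⋯ ≤ a_{m'}`. -/
def deltaSet {A : Type*} [Ring A] (m' : ℕ) (ϖ : Aˣ) :
    Set (Matrix (Fin m') (Fin m') A) :=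
  {T | ∃ a : Fin m' → ℤ, Monotone a ∧ (∀ i, 0 ≤ a i) ∧
    T = Matrix.diagonal fun i => ((ϖ ^ (a i) : Aˣ) : A)}

/-- The set `𝒵` of upper unitriangular matrices with strictly-upper entries in
`ϖ⁻¹ P(E)`, where `P(E) = {x | 1 ≤ v x}`. -/
def zSet {A : Type*} [Ring A] (m' : ℕ) (v : A → WithTop ℤ) (ϖ : Aˣ) :
    Set (Matrix (Fin m') (Fin m') A) :=
  {z | (∀ i, z i i = 1) ∧ (∀ i j : Fin m', i < j → (1 : WithTop ℤ) ≤ v ((ϖ : A) * z i j)) ∧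
    ∀ i j : Fin m', j < i → z i j = 0}

/-- The group `Ĩ¹`: diagonal entries in `1 + P(E)`, above-diagonal entries in `𝔄(E)`,
below-diagonal entries in `P(E)`, where `𝔄(E) = {x | 0 ≤ v x}` and
`P(E) = {x | 1 ≤ v x}`. -/
def iOneSet {A : Type*} [Ring A] (m' : ℕ) (v : A → WithTop ℤ) :
    Set (Matrix (Fin m') (Fin m') A) :=
  {x | (∀ i, (1 : WithTop ℤ) ≤ v (x i i - 1)) ∧
    (∀ i j : Fin m', i < j → (0 : WithTop ℤ) ≤ v (x i j)) ∧
    ∀ i j : Fin m', j < i → (1 : WithTop ℤ) ≤ v (x i j)}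

/-- The group `𝐖 = W ⋉ Δ̂` of monomial matrices with entries powers of `ϖ`. -/
def wSet {A : Type*} [Ring A] (m' : ℕ) (ϖ : Aˣ) :
    Set (Matrix (Fin m') (Fin m') A) :=
  {M | ∃ (w : Equiv.Perm (Fin m')) (b : Fin m' → ℤ),
    ∀ i j : Fin m', M i j = if i = w j then ((ϖ ^ (b j) : Aˣ) : A) else 0}

section SchurComplement

variable {A : Type*} [Ring A] {n : ℕ}

def firstSchurComplement (x : Matrix (Fin (n + 1)) (Fin (n + 1)) A) (u : Aˣ) :
    Matrix (Fin n) (Fin n) A :=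
  Matrix.of fun i j => x i.succ j.succ - x i.succ 0 * ↑u⁻¹ * x 0 j.succ

theorem firstSchurComplement_mul_apply {ι : Type*} {x : Matrix (Fin (n + 1)) (Fin (n + 1)) A}
    {u : Aˣ} (hu : (u : A) = x 0 0) (C : Matrix (Fin (n + 1)) ι A) (i : Fin n) (j : ι) :
    (firstSchurComplement x u * C.submatrix Fin.succ id) i j =
      (x * C) i.succ j - x i.succ 0 * ↑u⁻¹ * (x * C) 0 j := by
  simp only [firstSchurComplement, Matrix.mul_apply, Fin.sum_univ_succ, Matrix.of_apply,
    Matrix.submatrix_apply, id, sub_mul, Finset.sum_sub_distrib, mul_add, Finset.mul_sum,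
    mul_assoc, ← hu, Units.inv_mul_cancel_left]
  abel

/-- Rows `1, …, n` of the row operation that clears column `0` of `x` below `x₀₀ = u`. -/
def eliminationRows (x : Matrix (Fin (n + 1)) (Fin (n + 1)) A) (u : Aˣ) :
    Matrix (Fin n) (Fin (n + 1)) A :=
  Matrix.of fun i j => Fin.cases (-(x i.succ 0 * ↑u⁻¹)) ((1 : Matrix (Fin n) (Fin n) A) i) j

def schurInverseRows (x : Matrix (Fin (n + 1)) (Fin (n + 1)) A) (u : Aˣ)
    (S' : Matrix (Fin n) (Fin n) A) : Matrix (Fin n) (Fin (n + 1)) A :=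
  S' * eliminationRows x u

/-- Solving `x y' = 1` by elimination: rows `1, …, n` of `y'` are `S'` applied to the
eliminated right-hand side, and row `0` is then read off from the first equation. -/
def schurRightInverse (x : Matrix (Fin (n + 1)) (Fin (n + 1)) A) (u : Aˣ)
    (S' : Matrix (Fin n) (Fin n) A) : Matrix (Fin (n + 1)) (Fin (n + 1)) A :=
  Matrix.of fun i j => Fin.cases
    (↑u⁻¹ * ((1 : Matrix (Fin (n + 1)) (Fin (n + 1)) A) 0 j -
      ∑ k, x 0 k.succ * schurInverseRows x u S' k j))
    (fun k => schurInverseRows x u S' k j) i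

theorem schurInverseRows_apply_succ (x : Matrix (Fin (n + 1)) (Fin (n + 1)) A) (u : Aˣ)
    (S' : Matrix (Fin n) (Fin n) A) (i j : Fin n) : schurInverseRows x u S' i j.succ = S' i j := by
  simp [schurInverseRows, eliminationRows, Matrix.mul_apply, Matrix.one_apply]

theorem mul_schurRightInverse {x : Matrix (Fin (n + 1)) (Fin (n + 1)) A} {u : Aˣ}
    (hu : (u : A) = x 0 0) {S' : Matrix (Fin n) (Fin n) A}
    (hS' : firstSchurComplement x u * S' = 1) : x * schurRightInverse x u S' = 1 := by
  have row_zero : ∀ j, (x * schurRightInverse x u S') 0 j =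
      (1 : Matrix (Fin (n + 1)) (Fin (n + 1)) A) 0 j := by
    intro j
    simp [schurRightInverse, Matrix.mul_apply, Fin.sum_univ_succ, ← hu]
  have rows_succ : firstSchurComplement x u * schurInverseRows x u S' = eliminationRows x u := by
    rw [schurInverseRows, ← Matrix.mul_assoc, hS', Matrix.one_mul]
  ext i j
  induction i using Fin.cases with
  | zero => exact row_zero j
  | succ i =>
    have h := firstSchurComplement_mul_apply hu (schurRightInverse x u S') i j
    have : (schurRightInverse x u S').submatrix Fin.succ id = schurInverseRows x u S' := rfl
    rw [row_zero, this, rows_succ, eq_sub_iff_add_eq] at h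
    rw [← h]
    induction j using Fin.cases <;>
      simp [eliminationRows, Matrix.one_apply, (Fin.succ_ne_zero _).symm]

theorem submatrix_succ_mul_of_apply_succ_zero {B C : Matrix (Fin (n + 1)) (Fin (n + 1)) A}
    (hB : ∀ i : Fin n, B i.succ 0 = 0) :
    (B * C).submatrix Fin.succ Fin.succ =
      B.submatrix Fin.succ Fin.succ * C.submatrix Fin.succ Fin.succ := by
  ext i j
  simp [Matrix.mul_apply, Fin.sum_univ_succ, hB]

theorem firstSchurComplement_mul_mul_submatrix
    {x U y M : Matrix (Fin (n + 1)) (Fin (n + 1)) A} {u : Aˣ} (hu : (u : A) = x 0 0)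
    (hU : ∀ i : Fin n, U i.succ 0 = 0) (hM : ∀ j : Fin n, M 0 j.succ = 0) (h : x * U * y = M) :
    firstSchurComplement x u * U.submatrix Fin.succ Fin.succ * y.submatrix Fin.succ Fin.succ =
      M.submatrix Fin.succ Fin.succ := by
  rw [Matrix.mul_assoc, ← submatrix_succ_mul_of_apply_succ_zero hU]
  ext i j
  have := firstSchurComplement_mul_apply hu (U * y) i j.succ
  rwa [← Matrix.mul_assoc, h, hM, mul_zero, sub_zero] at this

end SchurComplement

section Monomial

variable {A : Type*} [Ring A] {n : ℕ}

def monomialMatrix (ϖ : Aˣ) (w : Equiv.Perm (Fin n)) (b : Fin n → ℤ) : Matrix (Fin n) (Fin n) A :=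
  Matrix.of fun i j => if i = w j then ((ϖ ^ b j : Aˣ) : A) else 0

theorem mem_wSet_iff {ϖ : Aˣ} {M : Matrix (Fin n) (Fin n) A} :
    M ∈ wSet n ϖ ↔ ∃ w b, M = monomialMatrix ϖ w b := by
  simp only [wSet, Set.mem_ofPred_eq, ← Matrix.ext_iff, monomialMatrix, Matrix.of_apply]

theorem monomialMatrix_one (ϖ : Aˣ) (a : Fin n → ℤ) :
    monomialMatrix ϖ 1 a = Matrix.diagonal fun i => ((ϖ ^ a i : Aˣ) : A) := by
  ext i j
  by_cases h : i = j <;> simp [monomialMatrix, h]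

theorem monomialMatrix_mul_apply (ϖ : Aˣ) (w : Equiv.Perm (Fin n)) (b : Fin n → ℤ)
    (N : Matrix (Fin n) (Fin n) A) (i j : Fin n) :
    (monomialMatrix ϖ w b * N) i j = ((ϖ ^ b (w.symm i) : Aˣ) : A) * N (w.symm i) j := by
  simp [monomialMatrix, Matrix.mul_apply, ← Equiv.symm_apply_eq]

theorem Equiv.Perm.decomposeFin_fst (w : Equiv.Perm (Fin (n + 1))) :
    (Equiv.Perm.decomposeFin w).1 = w 0 := by
  simpa using (Equiv.Perm.decomposeFin_symm_apply_zero (Equiv.Perm.decomposeFin w).1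
    (Equiv.Perm.decomposeFin w).2).symm

theorem Equiv.Perm.apply_succ_of_apply_zero {w : Equiv.Perm (Fin (n + 1))} (hw : w 0 = 0)
    (j : Fin n) : w j.succ = ((Equiv.Perm.decomposeFin w).2 j).succ := by
  conv_lhs => rw [← Equiv.Perm.decomposeFin.symm_apply_apply w]
  rw [← Prod.mk.eta (p := Equiv.Perm.decomposeFin w), Equiv.Perm.decomposeFin_symm_apply_succ,
    Equiv.Perm.decomposeFin_fst, hw, Equiv.swap_self, Equiv.refl_apply]

theorem Equiv.Perm.eq_one_of_decomposeFin_eq {w : Equiv.Perm (Fin (n + 1))}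
    (h : Equiv.Perm.decomposeFin w = (0, 1)) : w = 1 := by
  rw [← Equiv.Perm.decomposeFin.symm_apply_apply w, h, Equiv.Perm.decomposeFin_symm_of_one,
    Equiv.swap_self, Equiv.Perm.one_def]

theorem monomialMatrix_apply_zero_succ {ϖ : Aˣ} {w : Equiv.Perm (Fin (n + 1))} (hw : w 0 = 0)
    (b : Fin (n + 1) → ℤ) (j : Fin n) : monomialMatrix ϖ w b 0 j.succ = 0 := by
  simp [monomialMatrix, Equiv.Perm.apply_succ_of_apply_zero hw, (Fin.succ_ne_zero _).symm]

theorem monomialMatrix_submatrix_succ {ϖ : Aˣ} {w : Equiv.Perm (Fin (n + 1))} (hw : w 0 = 0)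
    (b : Fin (n + 1) → ℤ) : (monomialMatrix ϖ w b).submatrix Fin.succ Fin.succ =
      monomialMatrix ϖ (Equiv.Perm.decomposeFin w).2 (b ∘ Fin.succ) := by
  ext i j
  simp [monomialMatrix, Equiv.Perm.apply_succ_of_apply_zero hw]

end Monomial

section Valued

variable {A : Type*} [Ring A] {v : A → WithTop ℤ} {ϖ : Aˣ} {n : ℕ}
  (hv0 : ∀ x : A, v x = ⊤ ↔ x = 0) (hv1 : v 1 = 0)
  (hadd : ∀ x y : A, min (v x) (v y) ≤ v (x + y)) (hneg : ∀ x : A, v (-x) = v x)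
  (hmul : ∀ x y : A, v x + v y ≤ v (x * y))
  (hϖl : ∀ x : A, v ((ϖ : A) * x) = v (ϖ : A) + v x)
  (hunit : ∀ x : A, (1 : WithTop ℤ) ≤ v (x - 1) → IsUnit x)
  (hvinv : ∀ u : Aˣ, v (u : A) = 0 → v ((u⁻¹ : Aˣ) : A) = 0)

include hadd hneg in
theorem min_le_v_sub (s t : A) : min (v s) (v t) ≤ v (s - t) := by
  simpa [sub_eq_add_neg, hneg] using hadd s (-t)

include hv0 hadd in
theorem le_v_sum {ι : Type*} (s : Finset ι) (f : ι → A) {c : WithTop ℤ}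
    (h : ∀ k ∈ s, c ≤ v (f k)) : c ≤ v (∑ k ∈ s, f k) := by
  classical
  induction s using Finset.induction_on with
  | empty => simp [(hv0 0).2 rfl]
  | insert k s hk ih =>
    rw [Finset.sum_insert hk]
    exact (le_min (h k (s.mem_insert_self k))
      (ih fun l hl => h l (Finset.mem_insert_of_mem hl))).trans (hadd _ _)

include hmul in
theorem le_v_mul {c d : WithTop ℤ} {s t : A} (hs : c ≤ v s) (ht : d ≤ v t) :
    c + d ≤ v (s * t) :=
  (add_le_add hs ht).trans (hmul s t)

include hv1 hadd hneg in
theorem v_eq_zero_of_one_le_v_sub_one {s : A} (hs : 1 ≤ v (s - 1)) : v s = 0 := by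
  have hle : 0 ≤ v s := by simpa [hv1, zero_le_one.trans hs] using hadd (s - 1) 1
  refine le_antisymm (Order.le_of_lt_succ (lt_of_not_ge fun h1 => ?_)) hle
  have := (le_min h1 hs).trans (min_le_v_sub hadd hneg s (s - 1))
  simp [hv1] at this

include hv1 hadd hneg hmul hunit hvinv in
theorem exists_unit_of_one_le_v_sub_one {s : A} (hs : 1 ≤ v (s - 1)) :
    ∃ u : Aˣ, (u : A) = s ∧ v ((u⁻¹ : Aˣ) : A) = 0 ∧ 1 ≤ v (((u⁻¹ : Aˣ) : A) - 1) := by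
  obtain ⟨u, rfl⟩ := hunit s hs
  have hinv := hvinv u (v_eq_zero_of_one_le_v_sub_one hv1 hadd hneg hs)
  refine ⟨u, rfl, hinv, ?_⟩
  have : ((u⁻¹ : Aˣ) : A) - 1 = -(((u⁻¹ : Aˣ) : A) * ((u : A) - 1)) := by
    rw [mul_sub, Units.inv_mul, mul_one, neg_sub]
  simpa [this, hinv, hneg] using le_v_mul hmul hinv.ge hs

include hv1 hadd hneg hmul hunit hvinv in
theorem v_mul_of_one_le_v_sub_one {s : A} (hs : 1 ≤ v (s - 1)) (t : A) : v (s * t) = v t := by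
  obtain ⟨u, rfl, hinv, -⟩ := exists_unit_of_one_le_v_sub_one hv1 hadd hneg hmul hunit hvinv hs
  refine le_antisymm ?_ ?_
  · simpa [hinv] using hmul ((u⁻¹ : Aˣ) : A) (u * t)
  · simpa [v_eq_zero_of_one_le_v_sub_one hv1 hadd hneg hs] using hmul (u : A) t

include hv0 hv1 in
theorem exists_v_units_eq_coe (u : Aˣ) : ∃ e : ℤ, v (u : A) = e := by
  have : Nontrivial A := ⟨1, 0, fun h => by simp [h, (hv0 0).2 rfl] at hv1⟩
  obtain ⟨e, he⟩ := WithTop.ne_top_iff_exists.1 fun h => u.ne_zero ((hv0 _).1 h)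
  exact ⟨e, he.symm⟩

include hϖl in
theorem v_zpow_mul {e : ℤ} (he : v (ϖ : A) = e) (b : ℤ) (t : A) :
    v (((ϖ ^ b : Aˣ) : A) * t) = ((b * e : ℤ) : WithTop ℤ) + v t := by
  have step : ∀ c : ℤ, v (((ϖ ^ (c + 1) : Aˣ) : A) * t) = e + v (((ϖ ^ c : Aˣ) : A) * t) := by
    intro c
    rw [add_comm, zpow_one_add, Units.val_mul, mul_assoc, hϖl, he]
  induction b using Int.induction_on with
  | zero => simp
  | succ b ih =>
    rw [step, ih, ← add_assoc, ← WithTop.coe_add]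
    ring_nf
  | pred b ih =>
    have h := step (-(b : ℤ) - 1)
    rw [sub_add_cancel, ih] at h
    refine WithTop.add_left_cancel (x := (e : WithTop ℤ)) WithTop.coe_ne_top ?_
    rw [← h, ← add_assoc, ← WithTop.coe_add]
    ring_nf

theorem mem_iOneSet_iff {x : Matrix (Fin n) (Fin n) A} :
    x ∈ iOneSet n v ↔ ∀ i j, (if j ≤ i then 1 else 0 : WithTop ℤ) ≤ v ((x - 1) i j) := by
  constructor
  · rintro ⟨hd, hu, hl⟩ i j
    rcases lt_trichotomy i j with h | rfl | h
    · simpa [h.not_ge, Matrix.one_apply_ne h.ne] using hu i j h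
    · simpa using hd i
    · simpa [h.le, Matrix.one_apply_ne h.ne'] using hl i j h
  · intro h
    refine ⟨fun i => by simpa using h i i, fun i j hij => ?_, fun i j hij => ?_⟩
    · simpa [hij.not_ge, Matrix.one_apply_ne hij.ne] using h i j
    · simpa [hij.le, Matrix.one_apply_ne hij.ne'] using h i j

theorem submatrix_succ_mem_iOneSet {x : Matrix (Fin (n + 1)) (Fin (n + 1)) A}
    (hx : x ∈ iOneSet (n + 1) v) : x.submatrix Fin.succ Fin.succ ∈ iOneSet n v :=
  ⟨fun i => hx.1 i.succ, fun _ _ h => hx.2.1 _ _ (Fin.succ_lt_succ_iff.2 h),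
    fun _ _ h => hx.2.2 _ _ (Fin.succ_lt_succ_iff.2 h)⟩

theorem submatrix_succ_mem_zSet {z : Matrix (Fin (n + 1)) (Fin (n + 1)) A}
    (hz : z ∈ zSet (n + 1) v ϖ) : z.submatrix Fin.succ Fin.succ ∈ zSet n v ϖ :=
  ⟨fun i => hz.1 i.succ, fun _ _ h => hz.2.1 _ _ (Fin.succ_lt_succ_iff.2 h),
    fun _ _ h => hz.2.2 _ _ (Fin.succ_lt_succ_iff.2 h)⟩

include hv1 hadd hneg in
theorem v_apply_self_of_mem_iOneSet {x : Matrix (Fin n) (Fin n) A} (hx : x ∈ iOneSet n v)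
    (i : Fin n) : v (x i i) = 0 :=
  v_eq_zero_of_one_le_v_sub_one hv1 hadd hneg (hx.1 i)

include hv1 hadd hneg in
theorem v_apply_nonneg_of_mem_iOneSet {x : Matrix (Fin n) (Fin n) A} (hx : x ∈ iOneSet n v)
    (i j : Fin n) : 0 ≤ v (x i j) := by
  rcases lt_trichotomy i j with h | rfl | h
  · exact hx.2.1 i j h
  · exact (v_apply_self_of_mem_iOneSet hv1 hadd hneg hx i).ge
  · exact zero_le_one.trans (hx.2.2 i j h)

include hadd hneg hmul in
theorem firstSchurComplement_mem_iOneSet {x : Matrix (Fin (n + 1)) (Fin (n + 1)) A}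
    (hx : x ∈ iOneSet (n + 1) v) {u : Aˣ} (hu : v ((u⁻¹ : Aˣ) : A) = 0) :
    firstSchurComplement x u ∈ iOneSet n v := by
  rw [mem_iOneSet_iff] at hx ⊢
  intro i j
  have hcorr : 1 ≤ v (x i.succ 0 * ↑u⁻¹ * x 0 j.succ) := by
    simpa [Matrix.one_apply, Fin.succ_ne_zero, (Fin.succ_ne_zero _).symm] using
      le_v_mul hmul (le_v_mul hmul (hx i.succ 0) hu.ge) (hx 0 j.succ)
  have hentry : (firstSchurComplement x u - 1) i j =
      (x - 1) i.succ j.succ - x i.succ 0 * ↑u⁻¹ * x 0 j.succ := by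
    simp [firstSchurComplement, Matrix.one_apply, sub_right_comm]
  rw [hentry]
  refine le_trans (le_min ?_ ?_) (min_le_v_sub hadd hneg _ _)
  · simpa using hx i.succ j.succ
  · exact le_trans (by split_ifs <;> simp) hcorr

include hv0 hv1 hadd hneg hmul in
theorem one_le_v_schurInverseRows_apply_zero {x : Matrix (Fin (n + 1)) (Fin (n + 1)) A}
    (hx : x ∈ iOneSet (n + 1) v) {u : Aˣ} (hu : v ((u⁻¹ : Aˣ) : A) = 0)
    {S' : Matrix (Fin n) (Fin n) A} (hS' : S' ∈ iOneSet n v) (i : Fin n) :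
    1 ≤ v (schurInverseRows x u S' i 0) := by
  simp only [schurInverseRows, eliminationRows, Matrix.mul_apply, Matrix.of_apply, Fin.cases_zero]
  refine le_v_sum hv0 hadd _ _ fun k _ => ?_
  simpa [hneg] using le_v_mul hmul (v_apply_nonneg_of_mem_iOneSet hv1 hadd hneg hS' i k)
    (le_v_mul hmul (hx.2.2 k.succ 0 k.succ_pos) hu.ge)

include hv0 hv1 hadd hneg hmul in
theorem schurRightInverse_mem_iOneSet {x : Matrix (Fin (n + 1)) (Fin (n + 1)) A}
    (hx : x ∈ iOneSet (n + 1) v) {u : Aˣ} (hu : v ((u⁻¹ : Aˣ) : A) = 0)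
    (hu1 : 1 ≤ v (((u⁻¹ : Aˣ) : A) - 1)) {S' : Matrix (Fin n) (Fin n) A}
    (hS' : S' ∈ iOneSet n v) : schurRightInverse x u S' ∈ iOneSet (n + 1) v := by
  have hrows_zero := one_le_v_schurInverseRows_apply_zero hv0 hv1 hadd hneg hmul hx hu hS'
  have hrow0_zero : 1 ≤ v (∑ k, x 0 k.succ * schurInverseRows x u S' k 0) :=
    le_v_sum hv0 hadd _ _ fun k _ => by
      simpa using le_v_mul hmul (hx.2.1 0 k.succ k.succ_pos) (hrows_zero k)
  have hrow0_succ : ∀ j : Fin n, 0 ≤ v (∑ k, x 0 k.succ * schurInverseRows x u S' k j.succ) :=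
    fun j => le_v_sum hv0 hadd _ _ fun k _ => by
      simpa [schurInverseRows_apply_succ] using le_v_mul hmul (hx.2.1 0 k.succ k.succ_pos)
        (v_apply_nonneg_of_mem_iOneSet hv1 hadd hneg hS' k j)
  rw [mem_iOneSet_iff] at hS' ⊢
  intro i j
  induction i using Fin.cases with
  | zero =>
    induction j using Fin.cases with
    | zero =>
      have : (schurRightInverse x u S' - 1) 0 0 = (((u⁻¹ : Aˣ) : A) - 1) -
          ↑u⁻¹ * ∑ k, x 0 k.succ * schurInverseRows x u S' k 0 := by
        simp [schurRightInverse, mul_sub, sub_right_comm]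
      rw [this]
      refine le_trans (le_min hu1 ?_) (min_le_v_sub hadd hneg _ _)
      simpa [hu] using le_v_mul hmul hu.ge hrow0_zero
    | succ j =>
      simpa [schurRightInverse, Matrix.one_apply, (Fin.succ_ne_zero _).symm, hneg, hu] using
        le_v_mul hmul hu.ge (hrow0_succ j)
  | succ i =>
    induction j using Fin.cases with
    | zero => simpa [schurRightInverse, Matrix.one_apply] using hrows_zero i
    | succ j =>
      simpa [schurRightInverse, Matrix.one_apply, schurInverseRows_apply_succ] using hS' i j

include hv0 hv1 hadd hneg hmul hunit hvinv in
theorem exists_mul_eq_one_of_mem_iOneSet {x : Matrix (Fin n) (Fin n) A}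
    (hx : x ∈ iOneSet n v) : ∃ y ∈ iOneSet n v, x * y = 1 := by
  induction n with
  | zero => exact ⟨1, mem_iOneSet_iff.2 fun i => i.elim0, Subsingleton.elim _ _⟩
  | succ n ih =>
    obtain ⟨u, hu, hu_inv, hu_inv_sub⟩ :=
      exists_unit_of_one_le_v_sub_one hv1 hadd hneg hmul hunit hvinv (hx.1 0)
    obtain ⟨S', hS', hSS'⟩ := ih (firstSchurComplement_mem_iOneSet hadd hneg hmul hx hu_inv)
    exact ⟨schurRightInverse x u S',
      schurRightInverse_mem_iOneSet hv0 hv1 hadd hneg hmul hx hu_inv hu_inv_sub hS',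
      mul_schurRightInverse hu hSS'⟩

include hv0 hv1 hϖl in
theorem le_v_diagonal_mul_apply {e : ℤ} (he : v (ϖ : A) = e) (he0 : 0 < e)
    {z : Matrix (Fin n) (Fin n) A} (hz : z ∈ zSet n v ϖ) (a : Fin n → ℤ) (k j : Fin n) :
    (((a k - 1) * e + 1 : ℤ) : WithTop ℤ) ≤
      v ((Matrix.diagonal (fun i => ((ϖ ^ a i : Aˣ) : A)) * z) k j) := by
  rw [Matrix.diagonal_mul]
  rcases lt_trichotomy k j with h | rfl | h
  · have : ((ϖ ^ a k : Aˣ) : A) * z k j = ((ϖ ^ (a k - 1) : Aˣ) : A) * ((ϖ : A) * z k j) := by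
      rw [← mul_assoc, ← Units.val_mul, ← zpow_add_one, sub_add_cancel]
    rw [this, v_zpow_mul hϖl he, WithTop.coe_add]
    exact add_le_add le_rfl (by simpa using hz.2.1 k j h)
  · rw [hz.1, ← one_mul (1 : A), ← mul_assoc, mul_one, v_zpow_mul hϖl he, hv1, add_zero]
    exact WithTop.coe_le_coe.2 (by linarith)
  · rw [hz.2.2 k j h, mul_zero, (hv0 0).2 rfl]
    exact le_top

include hv0 hv1 hadd hneg hmul hϖl in
theorem le_v_mul_diagonal_mul_apply_zero {e : ℤ} (he : v (ϖ : A) = e) (he0 : 0 < e)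
    {a : Fin (n + 1) → ℤ} (ha : Monotone a) {z x : Matrix (Fin (n + 1)) (Fin (n + 1)) A}
    (hz : z ∈ zSet (n + 1) v ϖ) (hx : x ∈ iOneSet (n + 1) v) (j : Fin (n + 1)) :
    (((a 0 - 1) * e + 1 : ℤ) : WithTop ℤ) ≤
      v ((x * (Matrix.diagonal (fun i => ((ϖ ^ a i : Aˣ) : A)) * z)) 0 j) := by
  rw [Matrix.mul_apply]
  refine le_v_sum hv0 hadd _ _ fun k _ => ?_
  calc (((a 0 - 1) * e + 1 : ℤ) : WithTop ℤ) ≤ 0 + (((a k - 1) * e + 1 : ℤ) : WithTop ℤ) := by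
        rw [zero_add, WithTop.coe_le_coe]
        nlinarith [ha (Fin.zero_le k)]
    _ ≤ _ := le_v_mul hmul (v_apply_nonneg_of_mem_iOneSet hv1 hadd hneg hx 0 k)
        (le_v_diagonal_mul_apply hv0 hv1 hϖl he he0 hz a k j)

include hv1 hadd hneg hmul hϖl hunit hvinv in
theorem v_mul_diagonal_mul_apply_zero_zero {e : ℤ} (he : v (ϖ : A) = e) {a : Fin (n + 1) → ℤ}
    {z x : Matrix (Fin (n + 1)) (Fin (n + 1)) A} (hz : z ∈ zSet (n + 1) v ϖ)
    (hx : x ∈ iOneSet (n + 1) v) :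
    v ((x * (Matrix.diagonal (fun i => ((ϖ ^ a i : Aˣ) : A)) * z)) 0 0) =
      ((a 0 * e : ℤ) : WithTop ℤ) := by
  have : (x * (Matrix.diagonal (fun i => ((ϖ ^ a i : Aˣ) : A)) * z)) 0 0 =
      x 0 0 * (((ϖ ^ a 0 : Aˣ) : A) * 1) := by
    simp [Matrix.mul_apply, Fin.sum_univ_succ, hz.1 0, hz.2.2 _ 0 (Fin.succ_pos _)]
  rw [this, v_mul_of_one_le_v_sub_one hv1 hadd hneg hmul hunit hvinv (hx.1 0), v_zpow_mul hϖl he,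
    hv1, add_zero]

include hv0 hv1 hadd hneg hmul hϖl hunit hvinv in
theorem apply_zero_eq_of_mul_diagonal_mul_eq {e : ℤ} (he : v (ϖ : A) = e) (he0 : 0 < e)
    {a : Fin (n + 1) → ℤ} (ha : Monotone a) {z x y' : Matrix (Fin (n + 1)) (Fin (n + 1)) A}
    (hz : z ∈ zSet (n + 1) v ϖ) (hx : x ∈ iOneSet (n + 1) v) (hy' : y' ∈ iOneSet (n + 1) v)
    {w : Equiv.Perm (Fin (n + 1))} {b : Fin (n + 1) → ℤ}
    (h : x * (Matrix.diagonal (fun i => ((ϖ ^ a i : Aˣ) : A)) * z) = monomialMatrix ϖ w b * y') :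
    w 0 = 0 ∧ b 0 = a 0 := by
  set r := w.symm 0
  have hcol_r : v ((x * (Matrix.diagonal (fun i => ((ϖ ^ a i : Aˣ) : A)) * z)) 0 r) =
      ((b r * e : ℤ) : WithTop ℤ) := by
    rw [h, monomialMatrix_mul_apply, v_zpow_mul hϖl he,
      v_apply_self_of_mem_iOneSet hv1 hadd hneg hy', add_zero]
  have hcol_zero : ((a 0 * e : ℤ) : WithTop ℤ) = ((b r * e : ℤ) : WithTop ℤ) + v (y' r 0) := by
    rw [← v_mul_diagonal_mul_apply_zero_zero hv1 hadd hneg hmul hϖl hunit hvinv he hz hx, h,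
      monomialMatrix_mul_apply, v_zpow_mul hϖl he]
  have hab : a 0 ≤ b r := by
    have := (le_v_mul_diagonal_mul_apply_zero hv0 hv1 hadd hneg hmul hϖl he he0 ha hz hx r).trans
      hcol_r.le
    by_contra! hlt
    nlinarith [WithTop.coe_le_coe.1 this]
  have hr : r = 0 := by
    by_contra hr
    have : ((b r * e + 1 : ℤ) : WithTop ℤ) ≤ ((a 0 * e : ℤ) : WithTop ℤ) := by
      rw [hcol_zero, WithTop.coe_add]
      exact add_le_add le_rfl (by simpa using hy'.2.2 r 0 (Fin.pos_iff_ne_zero.2 hr))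
    nlinarith [WithTop.coe_le_coe.1 this]
  rw [hr, v_apply_self_of_mem_iOneSet hv1 hadd hneg hy', add_zero, WithTop.coe_inj] at hcol_zero
  exact ⟨((Equiv.symm_apply_eq w).1 hr).symm, (mul_right_cancel₀ he0.ne' hcol_zero).symm⟩

include hv0 hv1 hadd hneg hmul hϖl hunit hvinv in
theorem eq_one_of_mul_diagonal_mul_mul_eq_monomialMatrix {e : ℤ} (he : v (ϖ : A) = e)
    (he0 : 0 < e) {a : Fin n → ℤ} (ha : Monotone a) {z x y : Matrix (Fin n) (Fin n) A}
    (hz : z ∈ zSet n v ϖ) (hx : x ∈ iOneSet n v) (hy : y ∈ iOneSet n v)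
    {w : Equiv.Perm (Fin n)} {b : Fin n → ℤ}
    (h : x * (Matrix.diagonal (fun i => ((ϖ ^ a i : Aˣ) : A)) * z) * y = monomialMatrix ϖ w b) :
    w = 1 ∧ b = a := by
  induction n with
  | zero => exact ⟨Subsingleton.elim _ _, funext fun i => i.elim0⟩
  | succ n ih =>
    obtain ⟨y', hy', hyy'⟩ :=
      exists_mul_eq_one_of_mem_iOneSet hv0 hv1 hadd hneg hmul hunit hvinv hy
    obtain ⟨hw0, hb0⟩ := apply_zero_eq_of_mul_diagonal_mul_eq hv0 hv1 hadd hneg hmul hϖl hunit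
      hvinv he he0 ha hz hx hy' (by rw [← h, Matrix.mul_assoc _ y, hyy', Matrix.mul_one])
    obtain ⟨u, hu, hu_inv, -⟩ :=
      exists_unit_of_one_le_v_sub_one hv1 hadd hneg hmul hunit hvinv (hx.1 0)
    have hred := firstSchurComplement_mul_mul_submatrix hu
      (fun i => by simp [hz.2.2 i.succ 0 i.succ_pos]) (monomialMatrix_apply_zero_succ hw0 b) h
    have hdiag : (Matrix.diagonal (fun i => ((ϖ ^ a i : Aˣ) : A)) * z).submatrix Fin.succ Fin.succ =
        Matrix.diagonal (fun i => ((ϖ ^ a i.succ : Aˣ) : A)) * z.submatrix Fin.succ Fin.succ := by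
      ext i j
      simp [Matrix.diagonal_mul]
    rw [hdiag, monomialMatrix_submatrix_succ hw0] at hred
    obtain ⟨hw', hb'⟩ := ih (ha.comp Fin.strictMono_succ.monotone) (submatrix_succ_mem_zSet hz)
      (firstSchurComplement_mem_iOneSet hadd hneg hmul hx hu_inv) (submatrix_succ_mem_iOneSet hy)
      hred
    have hdecomp : Equiv.Perm.decomposeFin w = (0, 1) :=
      Prod.ext (by rw [Equiv.Perm.decomposeFin_fst, hw0]) hw'
    exact ⟨Equiv.Perm.eq_one_of_decomposeFin_eq hdecomp, funext (Fin.cases hb0 (congrFun hb'))⟩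

end Valued

theorem statement16_general {A : Type*} [Ring A] (m' : ℕ)
    (v : A → WithTop ℤ) (ϖ : Aˣ)
    (hv0 : ∀ x : A, v x = ⊤ ↔ x = 0)
    (hv1 : v 1 = 0)
    (hadd : ∀ x y : A, min (v x) (v y) ≤ v (x + y))
    (hneg : ∀ x : A, v (-x) = v x)
    (hmul : ∀ x y : A, v x + v y ≤ v (x * y))
    (hϖpos : (0 : WithTop ℤ) < v (ϖ : A))
    (hϖl : ∀ x : A, v ((ϖ : A) * x) = v (ϖ : A) + v x)
    (hunit : ∀ x : A, (1 : WithTop ℤ) ≤ v (x - 1) → IsUnit x)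
    (hvinv : ∀ u : Aˣ, v (u : A) = 0 → v ((u⁻¹ : Aˣ) : A) = 0)
    (τ z : Matrix (Fin m') (Fin m') A)
    (hτ : τ ∈ deltaSet m' ϖ) (hz : z ∈ zSet m' v ϖ)
    (hne : ({y | ∃ x₁ ∈ iOneSet m' v, ∃ x₂ ∈ iOneSet m' v, y = x₁ * (τ * z) * x₂} ∩
      wSet m' ϖ).Nonempty) :
    {y | ∃ x₁ ∈ iOneSet m' v, ∃ x₂ ∈ iOneSet m' v, y = x₁ * (τ * z) * x₂} ∩
      wSet m' ϖ = {τ} := by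
  obtain ⟨a, ha, -, rfl⟩ := hτ
  obtain ⟨e, he⟩ := exists_v_units_eq_coe hv0 hv1 ϖ
  have he0 : 0 < e := by exact_mod_cast he ▸ hϖpos
  refine Set.eq_singleton_iff_nonempty_unique_mem.2 ⟨hne, ?_⟩
  rintro M ⟨⟨x₁, hx₁, x₂, hx₂, rfl⟩, hM⟩
  obtain ⟨w, b, hwb⟩ := mem_wSet_iff.1 hM
  obtain ⟨rfl, rfl⟩ := eq_one_of_mul_diagonal_mul_mul_eq_monomialMatrix hv0 hv1 hadd hneg hmul
    hϖl hunit hvinv he he0 ha hz hx₁ hx₂ hwb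
  rw [hwb, monomialMatrix_one]

/-- Let `A = A(E)` be a central simple algebra with hereditary order `𝔄(E)` normalized
by `E^×`, radical `P(E)`, attached valuation `v`, and uniformizer `ϖ`.  If `τ ∈ Δ` and
`z ∈ 𝒵` satisfy `Ĩ¹ (τ z) Ĩ¹ ∩ 𝐖 ≠ ∅`, then `Ĩ¹ (τ z) Ĩ¹ ∩ 𝐖 = {τ}`. -/
theorem statement16 {A : Type*} [Ring A] (m' : ℕ)
    (v : A → WithTop ℤ) (ϖ : Aˣ)
    (hv0 : ∀ x : A, v x = ⊤ ↔ x = 0)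
    (hv1 : v 1 = 0)
    (hadd : ∀ x y : A, min (v x) (v y) ≤ v (x + y))
    (hneg : ∀ x : A, v (-x) = v x)
    (hmul : ∀ x y : A, v x + v y ≤ v (x * y))
    (hϖpos : (0 : WithTop ℤ) < v (ϖ : A))
    (hϖl : ∀ x : A, v ((ϖ : A) * x) = v (ϖ : A) + v x)
    (hϖr : ∀ x : A, v (x * (ϖ : A)) = v (ϖ : A) + v x)
    (hunit : ∀ x : A, (1 : WithTop ℤ) ≤ v (x - 1) → IsUnit x)
    (hvinv : ∀ u : Aˣ, v (u : A) = 0 → v ((u⁻¹ : Aˣ) : A) = 0)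
    (τ z : Matrix (Fin m') (Fin m') A)
    (hτ : τ ∈ deltaSet m' ϖ) (hz : z ∈ zSet m' v ϖ)
    (hne : ({y | ∃ x₁ ∈ iOneSet m' v, ∃ x₂ ∈ iOneSet m' v, y = x₁ * (τ * z) * x₂} ∩
      wSet m' ϖ).Nonempty) :
    {y | ∃ x₁ ∈ iOneSet m' v, ∃ x₂ ∈ iOneSet m' v, y = x₁ * (τ * z) * x₂} ∩
      wSet m' ϖ = {τ} :=
  statement16_general m' v ϖ hv0 hv1 hadd hneg hmul hϖpos hϖl hunit hvinv τ z hτ hz hne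
end
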